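/- arXiv:2203.13440 — 7 statements merged into one kernel-verified Lean document; each statement's English description precedes it below -/
import Mathlib

section
/- Let (X,T) be a topological dynamical system on a compact metric space and let x₀ ∈ X. Then x₀ is the unique positive-upper-Banach-density recurrent point of (X,T) if and only if for every x ∈ X and every open neighbourhood U of x₀, the return-time set N(x,U) = {n ∈ ℤ₊ : Tⁿx ∈ U} has lower Banach density one. -/
open Filter Topology MeasureTheory

variable {X : Type} [MetricSpace X]

def orbit (T : X → X) (x : X) : Set X := Set.range fun n : ℕ => T^[n] x

def IsTransitiveSys (T : X → X) : Prop :=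
  ∀ U V : Set X, IsOpen U → U.Nonempty → IsOpen V → V.Nonempty →
    {n : ℕ | (U ∩ T^[n] ⁻¹' V).Nonempty}.Infinite

def MinimalPoint (T : X → X) (x : X) : Prop :=
  ∀ y ∈ closure (orbit T x), x ∈ closure (orbit T y)

def MinimalSys (T : X → X) : Prop := ∀ x : X, Dense (orbit T x)

def IsMinimalSubset (T : X → X) (M : Set X) : Prop :=
  M.Nonempty ∧ IsClosed M ∧ Set.MapsTo T M M ∧
    ∀ M' ⊆ M, M'.Nonempty → IsClosed M' → Set.MapsTo T M' M' → M' = M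

noncomputable def ubd (F : Set ℕ) : ℝ :=
  Filter.limsup (fun N : ℕ => ⨆ m : ℕ, ((F ∩ Set.Ico m (m + N)).ncard : ℝ) / N) atTop

noncomputable def lbd (F : Set ℕ) : ℝ :=
  Filter.liminf (fun N : ℕ => ⨅ m : ℕ, ((F ∩ Set.Ico m (m + N)).ncard : ℝ) / N) atTop

def Syndetic (F : Set ℕ) : Prop := ∃ N : ℕ, ∀ k : ℕ, ∃ j ∈ F, k ≤ j ∧ j ≤ k + N

def Thick (F : Set ℕ) : Prop := ∀ l : ℕ, ∃ m : ℕ, Set.Icc m (m + l) ⊆ F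

def PiecewiseSyndetic (F : Set ℕ) : Prop := ∃ A B : Set ℕ, Thick A ∧ Syndetic B ∧ F = A ∩ B

def Fps : Set (Set ℕ) := {F | PiecewiseSyndetic F}
def Fpubd : Set (Set ℕ) := {F | 0 < ubd F}
def Finf : Set (Set ℕ) := {F | F.Infinite}

def FursFamily (S : Set (Set ℕ)) : Prop := ∀ F₁ F₂ : Set ℕ, F₁ ⊆ F₂ → F₁ ∈ S → F₂ ∈ S

def FamRecurrent {Z : Type} [MetricSpace Z] (S : Set (Set ℕ)) (T : Z → Z) (x : Z) : Prop :=
  ∀ U : Set Z, IsOpen U → x ∈ U → {n : ℕ | T^[n] x ∈ U} ∈ S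

def BrokenSensitive (T : X → X) (S : Set (Set ℕ)) (n : ℕ) : Prop :=
  ∃ δ > (0:ℝ), ∃ F₀ ∈ S, ∀ U : Set X, IsOpen U → U.Nonempty → ∀ l : ℕ,
    ∃ x : Fin n → X, (∀ i, x i ∈ U) ∧ ∃ m : ℕ,
      ∀ k ∈ F₀ ∩ Set.Icc 1 l, ∀ i j : Fin n, i ≠ j →
        δ < dist (T^[m + k] (x i)) (T^[m + k] (x j))

def SensitiveTuple (T : X → X) {n : ℕ} (x : Fin n → X) : Prop :=
  ∀ U : Set X, IsOpen U → U.Nonempty →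
    ∀ V : Fin n → Set X, (∀ i, IsOpen (V i) ∧ x i ∈ V i) →
      ∃ y : Fin n → X, (∀ i, y i ∈ U) ∧ ∃ m : ℕ, ∀ i, T^[m] (y i) ∈ V i

def EssentialSensitiveTuple (T : X → X) {n : ℕ} (x : Fin n → X) : Prop :=
  Function.Injective x ∧ SensitiveTuple T x

def prodMap (T : X → X) (n : ℕ) : (Fin n → X) → Fin n → X := fun x i => T (x i)

def BlockilyThickly (T : X → X) (n : ℕ) : Prop :=
  ∃ δ > (0:ℝ), ∀ k : ℕ, ∀ U : Set X, IsOpen U → U.Nonempty →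
    ∃ x : Fin n → X, (∀ i, x i ∈ U) ∧ ∃ m : ℕ, ∀ l ≤ k, ∀ i j : Fin n, i ≠ j →
      δ < dist (T^[m + l] (x i)) (T^[m + l] (x j))

def WeaklyMixing (T : X → X) : Prop :=
  IsTransitiveSys (fun p : X × X => (T p.1, T p.2))

def TopologicallyErgodic (T : X → X) : Prop :=
  ∀ U V : Set X, IsOpen U → U.Nonempty → IsOpen V → V.Nonempty →
    Syndetic {m : ℕ | (T^[m] ⁻¹' U ∩ V).Nonempty}

def MeanEquicontinuous (T : X → X) : Prop :=
  ∀ ε > (0:ℝ), ∃ δ > (0:ℝ), ∀ x y : X, dist x y < δ →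
    Filter.limsup (fun m : ℕ => (∑ k ∈ Finset.range m, dist (T^[k] x) (T^[k] y)) / m) atTop < ε

def BanachProximal (T : X → X) (x y : X) : Prop :=
  ∀ ε > (0:ℝ), ubd {m : ℕ | ε ≤ dist (T^[m] x) (T^[m] y)} = 0

def EquicontinuousSys (T : X → X) : Prop :=
  ∀ ε > (0:ℝ), ∃ δ > (0:ℝ), ∀ x y : X, dist x y < δ → ∀ n : ℕ, dist (T^[n] x) (T^[n] y) < ε

noncomputable def measSupp {Z : Type} [MetricSpace Z] [MeasurableSpace Z] (T : Z → Z) : Set Z :=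
  closure (⋃ μ ∈ {μ : Measure Z | IsProbabilityMeasure μ ∧
      ∀ s : Set Z, MeasurableSet s → μ (T ⁻¹' s) = μ s},
    {x : Z | ∀ U : Set Z, IsOpen U → x ∈ U → 0 < μ U})
section BDauxSection
open ENNReal
namespace BDaux

/-- window count -/
noncomputable def cnt (F : Set ℕ) (m N : ℕ) : ℕ := (F ∩ Set.Ico m (m + N)).ncard

lemma cnt_le (F : Set ℕ) (m N : ℕ) : cnt F m N ≤ N := by
  have h1 : cnt F m N ≤ (Set.Ico m (m + N)).ncard :=
    Set.ncard_le_ncard Set.inter_subset_right (Set.finite_Ico _ _)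
  have h2 : (Set.Ico m (m + N)).ncard = N := by
    rw [← Finset.coe_Ico, Set.ncard_coe_finset, Nat.card_Ico]
    omega
  omega

lemma cnt_mono {F G : Set ℕ} (h : F ⊆ G) (m N : ℕ) : cnt F m N ≤ cnt G m N :=
  Set.ncard_le_ncard (Set.inter_subset_inter_left _ h)
    ((Set.finite_Ico _ _).subset Set.inter_subset_right)

noncomputable def aN (F : Set ℕ) (N : ℕ) : ℝ := ⨆ m : ℕ, (cnt F m N : ℝ) / N
noncomputable def iN (F : Set ℕ) (N : ℕ) : ℝ := ⨅ m : ℕ, (cnt F m N : ℝ) / N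

lemma ubd_eq (F : Set ℕ) : ubd F = Filter.limsup (aN F) atTop := rfl
lemma lbd_eq (F : Set ℕ) : lbd F = Filter.liminf (iN F) atTop := rfl

lemma term_nonneg (F : Set ℕ) (m N : ℕ) : 0 ≤ (cnt F m N : ℝ) / N := by positivity

lemma term_le_one (F : Set ℕ) (m N : ℕ) : (cnt F m N : ℝ) / N ≤ 1 := by
  rcases Nat.eq_zero_or_pos N with h | h
  · simp [h]
  · rw [div_le_one (by exact_mod_cast h)]
    exact_mod_cast cnt_le F m N

lemma bddAbove_range (F : Set ℕ) (N : ℕ) : BddAbove (Set.range fun m => (cnt F m N : ℝ) / N) := by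
  refine ⟨1, ?_⟩; rintro r ⟨m, rfl⟩; exact term_le_one F m N

lemma bddBelow_range (F : Set ℕ) (N : ℕ) : BddBelow (Set.range fun m => (cnt F m N : ℝ) / N) := by
  refine ⟨0, ?_⟩; rintro r ⟨m, rfl⟩; exact term_nonneg F m N

lemma aN_nonneg (F : Set ℕ) (N : ℕ) : 0 ≤ aN F N :=
  le_trans (term_nonneg F 0 N) (le_ciSup (bddAbove_range F N) 0)

lemma aN_le_one (F : Set ℕ) (N : ℕ) : aN F N ≤ 1 := ciSup_le fun m => term_le_one F m N

lemma iN_nonneg (F : Set ℕ) (N : ℕ) : 0 ≤ iN F N := le_ciInf fun m => term_nonneg F m N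

lemma iN_le_one (F : Set ℕ) (N : ℕ) : iN F N ≤ 1 :=
  le_trans (ciInf_le (bddBelow_range F N) 0) (term_le_one F 0 N)

lemma iN_le_aN (F : Set ℕ) (N : ℕ) : iN F N ≤ aN F N :=
  le_trans (ciInf_le (bddBelow_range F N) 0) (le_ciSup (bddAbove_range F N) 0)

lemma aN_mono {F G : Set ℕ} (h : F ⊆ G) (N : ℕ) : aN F N ≤ aN G N := by
  refine ciSup_le fun m => le_trans ?_ (le_ciSup (bddAbove_range G N) m)
  gcongr
  exact_mod_cast cnt_mono h m N

-- boundedness of the sequences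
lemma aN_bdd_above (F : Set ℕ) : IsBoundedUnder (· ≤ ·) atTop (aN F) :=
  isBoundedUnder_of ⟨1, fun N => aN_le_one F N⟩
lemma aN_bdd_below (F : Set ℕ) : IsBoundedUnder (· ≥ ·) atTop (aN F) :=
  isBoundedUnder_of ⟨0, fun N => aN_nonneg F N⟩
lemma iN_bdd_above (F : Set ℕ) : IsBoundedUnder (· ≤ ·) atTop (iN F) :=
  isBoundedUnder_of ⟨1, fun N => iN_le_one F N⟩
lemma iN_bdd_below (F : Set ℕ) : IsBoundedUnder (· ≥ ·) atTop (iN F) :=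
  isBoundedUnder_of ⟨0, fun N => iN_nonneg F N⟩

lemma ubd_nonneg (F : Set ℕ) : 0 ≤ ubd F := by
  rw [ubd_eq]
  exact le_limsup_of_frequently_le (Eventually.frequently (Eventually.of_forall fun N => aN_nonneg F N))
    (aN_bdd_above F)

lemma ubd_le_one (F : Set ℕ) : ubd F ≤ 1 := by
  rw [ubd_eq]
  exact limsup_le_of_le (aN_bdd_below F).isCoboundedUnder_le
    (Eventually.of_forall fun N => aN_le_one F N)

lemma lbd_nonneg (F : Set ℕ) : 0 ≤ lbd F := by
  rw [lbd_eq]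
  exact le_liminf_of_le (iN_bdd_above F).isCoboundedUnder_ge
    (Eventually.of_forall fun N => iN_nonneg F N)

lemma lbd_le_one (F : Set ℕ) : lbd F ≤ 1 := by
  rw [lbd_eq]
  exact liminf_le_of_frequently_le
    (Eventually.frequently (Eventually.of_forall fun N => iN_le_one F N)) (iN_bdd_below F)

lemma lbd_le_ubd (F : Set ℕ) : lbd F ≤ ubd F := by
  rw [lbd_eq, ubd_eq]
  calc Filter.liminf (iN F) atTop ≤ Filter.liminf (aN F) atTop :=
        liminf_le_liminf (Eventually.of_forall fun N => iN_le_aN F N)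
          (iN_bdd_below F) (aN_bdd_above F).isCoboundedUnder_ge
    _ ≤ Filter.limsup (aN F) atTop := liminf_le_limsup (aN_bdd_above F) (aN_bdd_below F)

lemma ubd_mono {F G : Set ℕ} (h : F ⊆ G) : ubd F ≤ ubd G := by
  rw [ubd_eq, ubd_eq]
  exact limsup_le_limsup (Eventually.of_forall fun N => aN_mono h N)
    (aN_bdd_below F).isCoboundedUnder_le (aN_bdd_above G)

lemma limsup_one_sub {u : ℕ → ℝ} (h0 : ∀ n, 0 ≤ u n) (h1 : ∀ n, u n ≤ 1) :
    Filter.limsup (fun n => 1 - u n) atTop = 1 - Filter.liminf u atTop := by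
  have hb : IsBoundedUnder (· ≤ ·) atTop u := isBoundedUnder_of ⟨1, h1⟩
  have hb' : IsBoundedUnder (· ≥ ·) atTop u := isBoundedUnder_of ⟨0, h0⟩
  have hvb : IsBoundedUnder (· ≤ ·) atTop (fun n => 1 - u n) :=
    isBoundedUnder_of ⟨1, fun n => by linarith [h0 n]⟩
  have hvb' : IsBoundedUnder (· ≥ ·) atTop (fun n => 1 - u n) :=
    isBoundedUnder_of ⟨0, fun n => by linarith [h1 n]⟩
  apply le_antisymm
  · refine le_of_forall_pos_le_add fun ε hε => ?_
    have h2 : Filter.liminf u atTop - ε < Filter.liminf u atTop := by linarith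
    have h3 := eventually_lt_of_lt_liminf h2 hb'
    have h4 : ∀ᶠ n in atTop, 1 - u n ≤ 1 - Filter.liminf u atTop + ε :=
      h3.mono fun n hn => by linarith
    exact limsup_le_of_le hvb'.isCoboundedUnder_le h4
  · refine le_of_forall_pos_le_add fun ε hε => ?_
    have h2 : Filter.limsup (fun n => 1 - u n) atTop <
        Filter.limsup (fun n => 1 - u n) atTop + ε := by linarith
    have h3 := eventually_lt_of_limsup_lt h2 hvb
    have h4 : ∀ᶠ n in atTop,
        1 - Filter.limsup (fun n => 1 - u n) atTop - ε ≤ u n :=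
      h3.mono fun n hn => by linarith
    have h5 := le_liminf_of_le hb.isCoboundedUnder_ge h4
    linarith

lemma cnt_compl (F : Set ℕ) (m N : ℕ) : cnt Fᶜ m N = N - cnt F m N := by
  have hdis : Disjoint (F ∩ Set.Ico m (m + N)) (Fᶜ ∩ Set.Ico m (m + N)) :=
    Set.disjoint_of_subset Set.inter_subset_left Set.inter_subset_left disjoint_compl_right
  have hun : (F ∩ Set.Ico m (m + N)) ∪ (Fᶜ ∩ Set.Ico m (m + N)) = Set.Ico m (m + N) := by
    rw [← Set.union_inter_distrib_right, Set.union_compl_self, Set.univ_inter]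
  have hfin : (Set.Ico m (m + N)).Finite := Set.finite_Ico _ _
  have := Set.ncard_union_eq hdis (hfin.subset Set.inter_subset_right)
    (hfin.subset Set.inter_subset_right)
  rw [hun] at this
  have hN : (Set.Ico m (m + N)).ncard = N := by
    rw [← Finset.coe_Ico, Set.ncard_coe_finset, Nat.card_Ico]; omega
  unfold cnt
  omega

lemma ciSup_one_sub (f : ℕ → ℝ) (h0 : ∀ m, 0 ≤ f m) (h1 : ∀ m, f m ≤ 1) :
    ⨆ m, (1 - f m) = 1 - ⨅ m, f m := by
  have hba : BddAbove (Set.range fun m => 1 - f m) := ⟨1, by rintro r ⟨m, rfl⟩; simp; linarith [h0 m]⟩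
  have hbb : BddBelow (Set.range f) := ⟨0, by rintro r ⟨m, rfl⟩; exact h0 m⟩
  apply le_antisymm
  · exact ciSup_le fun m => by linarith [ciInf_le hbb m]
  · refine le_of_forall_pos_le_add fun ε hε => ?_
    have h2 : ⨅ m, f m < (⨅ m, f m) + ε := by linarith
    obtain ⟨m, hm⟩ := exists_lt_of_ciInf_lt h2
    have := le_ciSup hba m
    linarith

lemma aN_compl (F : Set ℕ) (N : ℕ) (hN : 1 ≤ N) : aN Fᶜ N = 1 - iN F N := by
  have hNpos : (0:ℝ) < N := by exact_mod_cast hN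
  have key : ∀ m, (cnt Fᶜ m N : ℝ) / N = 1 - (cnt F m N : ℝ) / N := by
    intro m
    rw [cnt_compl]
    have h1 : cnt F m N ≤ N := cnt_le F m N
    rw [Nat.cast_sub h1, sub_div, div_self (ne_of_gt hNpos)]
  unfold aN iN
  calc (⨆ m, (cnt Fᶜ m N : ℝ) / N) = ⨆ m, (1 - (cnt F m N : ℝ) / N) := by
        congr 1; ext m; exact key m
    _ = 1 - ⨅ m, (cnt F m N : ℝ) / N :=
        ciSup_one_sub _ (fun m => term_nonneg F m N) (fun m => term_le_one F m N)

lemma ubd_compl (F : Set ℕ) : ubd Fᶜ = 1 - lbd F := by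
  rw [ubd_eq, lbd_eq]
  have hcong : ∀ᶠ N in atTop, aN Fᶜ N = 1 - iN F N := by
    filter_upwards [eventually_ge_atTop 1] with N hN using aN_compl F N hN
  rw [limsup_congr hcong]
  exact limsup_one_sub (fun N => iN_nonneg F N) (fun N => iN_le_one F N)

lemma ubd_pos_extract {F : Set ℕ} (h : 0 < ubd F) :
    ∃ d : ℝ, 0 < d ∧ ∀ k : ℕ, ∃ N m : ℕ, k < N ∧ d * N ≤ (cnt F m N : ℝ) := by
  refine ⟨ubd F / 2, by linarith, fun k => ?_⟩
  have h1 : ubd F / 2 < ubd F := by linarith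
  rw [ubd_eq] at h1
  have h2 := frequently_lt_of_lt_limsup (aN_bdd_below F).isCoboundedUnder_le h1
  rw [frequently_atTop] at h2
  obtain ⟨N, hNk, hN⟩ := h2 (k + 1)
  have hNpos : (0:ℝ) < N := by
    have : 1 ≤ N := by omega
    exact_mod_cast this
  obtain ⟨m, hm⟩ := (lt_ciSup_iff (bddAbove_range F N)).1 hN
  refine ⟨N, m, by omega, ?_⟩
  rw [← le_div_iff₀ hNpos]
  exact le_of_lt hm

lemma tendsto_aN_zero {F : Set ℕ} (h : ubd F = 0) : Tendsto (aN F) atTop (𝓝 0) := by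
  have hinf : Filter.liminf (aN F) atTop = 0 := by
    apply le_antisymm
    · rw [← h, ubd_eq]; exact liminf_le_limsup (aN_bdd_above F) (aN_bdd_below F)
    · exact le_liminf_of_le (aN_bdd_above F).isCoboundedUnder_ge
        (Eventually.of_forall fun N => aN_nonneg F N)
  exact tendsto_of_liminf_eq_limsup hinf h (aN_bdd_above F) (aN_bdd_below F)

/-- ENNReal window density -/
noncomputable def eDen (G : Set ℕ) : ℝ≥0∞ :=
  Filter.limsup (fun N : ℕ => ⨆ m : ℕ, (cnt G m N : ℝ≥0∞) / (N : ℝ≥0∞)) atTop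

lemma ubd_pos_of_eDen {G : Set ℕ} (h : eDen G ≠ 0) : 0 < ubd G := by
  rcases lt_or_eq_of_le (ubd_nonneg G) with h' | h'
  · exact h'
  exfalso
  apply h
  have htend := tendsto_aN_zero h'.symm
  have key : ∀ ε : ℝ, 0 < ε → eDen G ≤ ENNReal.ofReal ε := by
    intro ε hε
    have hev : ∀ᶠ N in atTop, (⨆ m : ℕ, (cnt G m N : ℝ≥0∞) / (N : ℝ≥0∞)) ≤ ENNReal.ofReal ε := by
      have hev1 : ∀ᶠ N in atTop, aN G N < ε := by
        have := htend.eventually (eventually_lt_nhds hε)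
        simpa using this
      filter_upwards [hev1, eventually_ge_atTop 1] with N hN hN1
      refine iSup_le fun m => ?_
      have hterm : (cnt G m N : ℝ) / N ≤ ε :=
        le_of_lt (lt_of_le_of_lt (le_ciSup (bddAbove_range G N) m) hN)
      have hNpos : (0:ℝ) < N := by exact_mod_cast hN1
      have hcnt : (cnt G m N : ℝ) ≤ ε * N := by
        rw [div_le_iff₀ hNpos] at hterm; exact hterm
      have hNne : (N:ℝ≥0∞) ≠ 0 := by
        simp only [ne_eq, Nat.cast_eq_zero]; omega
      rw [ENNReal.div_le_iff hNne (by simp)]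
      calc (cnt G m N : ℝ≥0∞) = ENNReal.ofReal (cnt G m N : ℝ) := by
            rw [ENNReal.ofReal_natCast]
        _ ≤ ENNReal.ofReal (ε * N) := ENNReal.ofReal_le_ofReal hcnt
        _ = ENNReal.ofReal ε * (N : ℝ≥0∞) := by
            rw [ENNReal.ofReal_mul (le_of_lt hε), ENNReal.ofReal_natCast]
    exact limsup_le_of_le (by isBoundedDefault) hev
  have h2 : ∀ n : ℕ, eDen G ≤ ENNReal.ofReal (1 / (n + 1) : ℝ) := fun n =>
    key _ (by positivity)
  have h3 : Tendsto (fun n : ℕ => ENNReal.ofReal (1 / (n + 1) : ℝ)) atTop (𝓝 0) := by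
    rw [← ENNReal.ofReal_zero]
    apply ENNReal.tendsto_ofReal
    exact tendsto_one_div_add_atTop_nhds_zero_nat
  have := ge_of_tendsto h3 (Eventually.of_forall h2)
  exact le_antisymm this (zero_le)

lemma cnt_eq_sum (P : ℕ → Prop) (m N : ℕ) :
    (cnt {n | P n} m N : ℝ≥0∞) =
      ∑ j ∈ Finset.range N, Set.indicator {k : ℕ | P (m + k)} (fun _ => (1:ℝ≥0∞)) j := by
  induction N with
  | zero => simp [cnt]
  | succ N ih =>
    have hset : {n | P n} ∩ Set.Ico m (m + (N+1)) =
        ({n | P n} ∩ Set.Ico m (m + N)) ∪ ({n | P n} ∩ {m + N}) := by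
      ext k
      simp only [Set.mem_inter_iff, Set.mem_Ico, Set.mem_union, Set.mem_singleton_iff,
        Set.mem_setOf_eq]
      constructor
      · rintro ⟨hP, h1, h2⟩
        rcases Nat.lt_or_ge k (m + N) with h | h
        · exact Or.inl ⟨hP, h1, h⟩
        · exact Or.inr ⟨hP, by omega⟩
      · rintro (⟨hP, h1, h2⟩ | ⟨hP, h⟩)
        · exact ⟨hP, h1, by omega⟩
        · exact ⟨hP, by omega, by omega⟩
    have hdisj : Disjoint ({n | P n} ∩ Set.Ico m (m + N)) ({n | P n} ∩ {m + N}) := by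
      rw [Set.disjoint_iff_inter_eq_empty]
      ext k
      simp only [Set.mem_inter_iff, Set.mem_Ico, Set.mem_singleton_iff, Set.mem_setOf_eq,
        Set.mem_empty_iff_false, iff_false]
      rintro ⟨⟨_, _, h2⟩, _, h3⟩; omega
    have hcard : cnt {n | P n} m (N+1) =
        cnt {n | P n} m N + ({n | P n} ∩ {m + N}).ncard := by
      unfold cnt
      rw [hset]
      exact Set.ncard_union_eq hdisj
        ((Set.finite_Ico _ _).subset Set.inter_subset_right)
        ((Set.finite_singleton _).subset Set.inter_subset_right)
    rw [Finset.sum_range_succ, ← ih, hcard]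
    push_cast
    congr 1
    by_cases hP : P (m + N)
    · have : {n | P n} ∩ {m + N} = {m + N} := by
        ext k; simp only [Set.mem_inter_iff, Set.mem_singleton_iff, Set.mem_setOf_eq]
        constructor
        · rintro ⟨_, rfl⟩; rfl
        · rintro rfl; exact ⟨hP, rfl⟩
      rw [this, Set.indicator_of_mem (by simpa using hP)]
      simp
    · have : {n | P n} ∩ {m + N} = ∅ := by
        ext k; simp only [Set.mem_inter_iff, Set.mem_singleton_iff, Set.mem_setOf_eq,
          Set.mem_empty_iff_false, iff_false]
        rintro ⟨hPk, rfl⟩; exact hP hPk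
      rw [this, Set.indicator_of_notMem (by simpa using hP)]
      simp

lemma cnt_succ_set (S : Set ℕ) (m N : ℕ) : cnt {n | n + 1 ∈ S} m N = cnt S (m+1) N := by
  unfold cnt
  have himg : (fun n => n + 1) '' ({n | n + 1 ∈ S} ∩ Set.Ico m (m + N)) =
      S ∩ Set.Ico (m+1) (m+1+N) := by
    ext k
    simp only [Set.mem_image, Set.mem_inter_iff, Set.mem_Ico, Set.mem_setOf_eq]
    constructor
    · rintro ⟨j, ⟨hS, h1, h2⟩, rfl⟩; exact ⟨hS, by omega, by omega⟩
    · rintro ⟨hS, h1, h2⟩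
      have hk : k - 1 + 1 = k := by omega
      exact ⟨k - 1, ⟨by rw [hk]; exact hS, by omega, by omega⟩, hk⟩
  rw [← himg, Set.ncard_image_of_injective _ (fun a b => by omega)]

lemma cnt_zero_le (S : Set ℕ) (N : ℕ) : cnt S 0 N ≤ cnt S 1 N + 1 := by
  have hsub : S ∩ Set.Ico 0 (0 + N) ⊆ (S ∩ Set.Ico 1 (1 + N)) ∪ {0} := by
    intro k ⟨hk, h1, h2⟩
    rcases Nat.eq_zero_or_pos k with rfl | h
    · exact Or.inr rfl
    · exact Or.inl ⟨hk, by omega, by omega⟩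
  calc cnt S 0 N ≤ ((S ∩ Set.Ico 1 (1 + N)) ∪ {0}).ncard :=
        Set.ncard_le_ncard hsub (Set.Finite.union
          ((Set.finite_Ico _ _).subset Set.inter_subset_right) (Set.finite_singleton _))
    _ ≤ cnt S 1 N + ({0} : Set ℕ).ncard := Set.ncard_union_le _ _
    _ = cnt S 1 N + 1 := by simp

lemma ennreal_limsup_le_of_le_add {u v w : ℕ → ℝ≥0∞} (hw : Tendsto w atTop (𝓝 0))
    (h : ∀ N, u N ≤ v N + w N) : Filter.limsup u atTop ≤ Filter.limsup v atTop := by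
  rcases eq_top_or_lt_top (Filter.limsup v atTop) with htop | hlt
  · rw [htop]; exact le_top
  refine ENNReal.le_of_forall_pos_le_add fun δ hδ _ => ?_
  have hδ2 : (0:ℝ≥0∞) < (δ:ℝ≥0∞) / 2 := by
    simp only [ENNReal.div_pos_iff]
    exact ⟨by exact_mod_cast hδ.ne', by simp⟩
  have h1 : Filter.limsup v atTop < Filter.limsup v atTop + δ/2 :=
    ENNReal.lt_add_right hlt.ne hδ2.ne'
  have h2 := eventually_lt_of_limsup_lt h1
  have h3 : ∀ᶠ N in atTop, w N ≤ δ/2 := hw.eventually (eventually_le_nhds hδ2)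
  have h4 : ∀ᶠ N in atTop, u N ≤ Filter.limsup v atTop + δ := by
    filter_upwards [h2, h3] with N hN2 hN3
    calc u N ≤ v N + w N := h N
      _ ≤ (Filter.limsup v atTop + δ/2) + δ/2 := add_le_add hN2.le hN3
      _ = Filter.limsup v atTop + δ := by
          rw [add_assoc, ENNReal.add_halves]
  exact limsup_le_of_le (by isBoundedDefault) h4

lemma eDen_succ (S : Set ℕ) : eDen {n | n + 1 ∈ S} = eDen S := by
  set c : ℕ → ℕ → ℝ≥0∞ := fun m N => (cnt S m N : ℝ≥0∞) / (N : ℝ≥0∞) with hc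
  have hc' : ∀ m N, (cnt {n | n + 1 ∈ S} m N : ℝ≥0∞) / (N : ℝ≥0∞) = c (m+1) N := by
    intro m N; rw [hc]; simp only; rw [cnt_succ_set]
  have hb' : (fun N => ⨆ m : ℕ, (cnt {n | n + 1 ∈ S} m N : ℝ≥0∞) / (N : ℝ≥0∞)) =
      fun N => ⨆ m : ℕ, c (m+1) N := by
    funext N; congr 1; funext m; exact hc' m N
  unfold eDen
  rw [hb']
  apply le_antisymm
  · apply limsup_le_limsup ?_ (by isBoundedDefault) (by isBoundedDefault)
    apply Eventually.of_forall
    intro N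
    exact iSup_le fun m => le_iSup (fun m => c m N) (m+1)
  · apply ennreal_limsup_le_of_le_add (w := fun N => ((N:ℝ≥0∞))⁻¹)
      ENNReal.tendsto_inv_nat_nhds_zero
    intro N
    refine iSup_le fun m => ?_
    rcases m with _ | m
    · -- m = 0
      have h1 : cnt S 0 N ≤ cnt S 1 N + 1 := cnt_zero_le S N
      calc c 0 N ≤ ((cnt S 1 N + 1 : ℕ) : ℝ≥0∞) / (N : ℝ≥0∞) := by
            rw [hc]; simp only
            have : (cnt S 0 N : ℝ≥0∞) ≤ ((cnt S 1 N + 1 : ℕ) : ℝ≥0∞) := by exact_mod_cast h1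
            exact ENNReal.div_le_div this le_rfl
        _ = (cnt S 1 N : ℝ≥0∞) / N + 1 / N := by
            push_cast
            rw [ENNReal.add_div]
        _ ≤ (⨆ m : ℕ, c (m+1) N) + (N:ℝ≥0∞)⁻¹ := by
            gcongr
            · exact le_iSup (fun m => c (m+1) N) 0
            · rw [one_div]
    · calc c (m+1) N ≤ ⨆ m : ℕ, c (m+1) N := le_iSup (fun m => c (m+1) N) m
        _ ≤ _ := le_self_add


lemma measurable_limsupENN {X : Type} {mX : MeasurableSpace X} {f : ℕ → X → ℝ≥0∞}
    (hf : ∀ n, Measurable (f n)) :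
    Measurable (fun z => Filter.limsup (fun n => f n z) atTop) := by
  simp_rw [limsup_eq_iInf_iSup_of_nat]
  exact Measurable.iInf fun n => Measurable.iSup fun i => Measurable.iSup fun _ => hf i

theorem exists_famRecurrent_of_invariant {X : Type} [MetricSpace X] [CompactSpace X]
    {mX : MeasurableSpace X} [BorelSpace X]
    (T : X → X) (hT : Continuous T) (μ : Measure X) [IsProbabilityMeasure μ]
    (hinv : ∀ s : Set X, MeasurableSet s → μ (T ⁻¹' s) = μ s)
    (Y : Set X) (hY : 0 < μ Y) : ∃ y ∈ Y, FamRecurrent Fpubd T y := by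
  classical
  set e : Set X → X → ℝ≥0∞ := fun V z => eDen {n | T^[n] z ∈ V} with he
  have hcnt_eq : ∀ (V : Set X) (z : X) (m N : ℕ),
      (cnt {n | T^[n] z ∈ V} m N : ℝ≥0∞) =
        ∑ j ∈ Finset.range N, Set.indicator ((T^[m + j]) ⁻¹' V) (fun _ => (1:ℝ≥0∞)) z := by
    intro V z m N
    rw [cnt_eq_sum (fun n => T^[n] z ∈ V) m N]
    refine Finset.sum_congr rfl fun j _ => ?_
    by_cases h : T^[m+j] z ∈ V
    · rw [Set.indicator_of_mem (by exact h), Set.indicator_of_mem (by exact h)]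
    · rw [Set.indicator_of_notMem (by exact h), Set.indicator_of_notMem (by exact h)]
  have hiter_cont : ∀ j : ℕ, Continuous (T^[j]) := fun j => hT.iterate j
  have hcnt_meas : ∀ (V : Set X), IsOpen V → ∀ m N : ℕ,
      Measurable (fun z => (cnt {n | T^[n] z ∈ V} m N : ℝ≥0∞)) := by
    intro V hV m N
    have : (fun z => (cnt {n | T^[n] z ∈ V} m N : ℝ≥0∞)) = fun z =>
        ∑ j ∈ Finset.range N, Set.indicator ((T^[m + j]) ⁻¹' V) (fun _ => (1:ℝ≥0∞)) z := by
      funext z; exact hcnt_eq V z m N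
    rw [this]
    exact Finset.measurable_sum _ fun j _ =>
      measurable_const.indicator ((hV.preimage (hiter_cont (m+j))).measurableSet)
  have he_meas : ∀ V : Set X, IsOpen V → Measurable (e V) := by
    intro V hV
    have : e V = fun z => Filter.limsup
        (fun N => ⨆ m : ℕ, (cnt {n | T^[n] z ∈ V} m N : ℝ≥0∞) / (N : ℝ≥0∞)) atTop := rfl
    rw [this]
    exact measurable_limsupENN fun N =>
      Measurable.iSup fun m => (hcnt_meas V hV m N).div_const _
  have he_shift : ∀ (V : Set X) (z : X), e V (T z) = e V z := by
    intro V z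
    have hset : {n | T^[n] (T z) ∈ V} = {n | n + 1 ∈ {n | T^[n] z ∈ V}} := by
      ext n
      simp only [Set.mem_setOf_eq, ← Function.iterate_succ_apply]
    show eDen _ = eDen _
    rw [hset, eDen_succ]
  have hnull : ∀ V : Set X, IsOpen V → μ (V ∩ {z | e V z = 0}) = 0 := by
    intro V hV
    by_contra hpos
    set A := {z | e V z = 0} with hA
    have hAmeas : MeasurableSet A := (he_meas V hV) (measurableSet_singleton 0)
    have hTA : T ⁻¹' A = A := by
      ext z
      simp only [hA, Set.mem_preimage, Set.mem_setOf_eq]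
      rw [he_shift V z]
    set ρ := μ.restrict A with hρ
    have hρinv : ∀ s : Set X, MeasurableSet s → ρ (T ⁻¹' s) = ρ s := by
      intro s hs
      rw [hρ, Measure.restrict_apply (hT.measurable hs), Measure.restrict_apply hs]
      conv_lhs => rw [← hTA, ← Set.preimage_inter]
      exact hinv _ (hs.inter hAmeas)
    have hiter : ∀ j : ℕ, ρ ((T^[j]) ⁻¹' V) = ρ V := by
      intro j
      induction j with
      | zero => simp
      | succ j ih =>
        have hcomp : (T^[j+1]) ⁻¹' V = T ⁻¹' ((T^[j]) ⁻¹' V) := by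
          rw [Function.iterate_succ]; rfl
        rw [hcomp, hρinv _ ((hV.preimage (hiter_cont j)).measurableSet), ih]
    set fN : ℕ → X → ℝ≥0∞ := fun N z =>
      (∑ j ∈ Finset.range N, Set.indicator ((T^[j]) ⁻¹' V) (fun _ => (1:ℝ≥0∞)) z) / N with hfN
    have hfmeas : ∀ N, Measurable (fN N) := by
      intro N
      exact (Finset.measurable_sum _ fun j _ =>
        measurable_const.indicator ((hV.preimage (hiter_cont j)).measurableSet)).div_const _
    have hfle : ∀ N z, fN N z ≤ 1 := by
      intro N z
      rcases Nat.eq_zero_or_pos N with rfl | hN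
      · simp [hfN]
      have hsum : (∑ j ∈ Finset.range N, Set.indicator ((T^[j]) ⁻¹' V) (fun _ => (1:ℝ≥0∞)) z)
          ≤ N := by
        calc (∑ j ∈ Finset.range N, Set.indicator ((T^[j]) ⁻¹' V) (fun _ => (1:ℝ≥0∞)) z)
            ≤ ∑ _j ∈ Finset.range N, (1:ℝ≥0∞) :=
              Finset.sum_le_sum fun j _ => by
                by_cases hzj : z ∈ (T^[j]) ⁻¹' V <;> simp [hzj]
          _ = N := by simp
      rw [hfN]
      simp only
      rw [ENNReal.div_le_iff (by exact_mod_cast hN.ne') (by simp), one_mul]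
      exact hsum
    have hint : ∀ N : ℕ, 1 ≤ N → ∫⁻ z, fN N z ∂ρ = μ (V ∩ A) := by
      intro N hN
      have h1 : ∀ z, fN N z = (N : ℝ≥0∞)⁻¹ *
          (∑ j ∈ Finset.range N, Set.indicator ((T^[j]) ⁻¹' V) (fun _ => (1:ℝ≥0∞)) z) := by
        intro z; rw [hfN]; simp only [div_eq_mul_inv, mul_comm]
      have hNne : (N : ℝ≥0∞) ≠ 0 := by
        simp only [ne_eq, Nat.cast_eq_zero]; omega
      calc ∫⁻ z, fN N z ∂ρ
          = (N : ℝ≥0∞)⁻¹ * ∫⁻ z, (∑ j ∈ Finset.range N,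
              Set.indicator ((T^[j]) ⁻¹' V) (fun _ => (1:ℝ≥0∞)) z) ∂ρ := by
            simp_rw [h1]
            rw [lintegral_const_mul _ (Finset.measurable_sum _ fun j _ =>
              measurable_const.indicator ((hV.preimage (hiter_cont j)).measurableSet))]
        _ = (N : ℝ≥0∞)⁻¹ * ∑ j ∈ Finset.range N, ρ ((T^[j]) ⁻¹' V) := by
            congr 1
            rw [lintegral_finset_sum _ fun j _ =>
              measurable_const.indicator ((hV.preimage (hiter_cont j)).measurableSet)]
            refine Finset.sum_congr rfl fun j _ => ?_
            rw [lintegral_indicator_const ((hV.preimage (hiter_cont j)).measurableSet), one_mul]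
        _ = (N : ℝ≥0∞)⁻¹ * (N * ρ V) := by
            congr 1
            rw [Finset.sum_congr rfl fun j _ => hiter j, Finset.sum_const, Finset.card_range,
              nsmul_eq_mul]
        _ = ρ V := by
            rw [← mul_assoc, ENNReal.inv_mul_cancel hNne (by simp), one_mul]
        _ = μ (V ∩ A) := by rw [hρ, Measure.restrict_apply hV.measurableSet]
    have hlim_int : Filter.limsup (fun N => ∫⁻ z, fN N z ∂ρ) atTop = μ (V ∩ A) := by
      have : (fun N => ∫⁻ z, fN N z ∂ρ) =ᶠ[atTop] (fun _ => μ (V ∩ A)) := by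
        filter_upwards [eventually_ge_atTop 1] with N hN using hint N hN
      rw [limsup_congr this, limsup_const]
    have hrevF := limsup_lintegral_le (μ := ρ) (f := fN) (fun _ => (1:ℝ≥0∞)) hfmeas
      (fun N => Filter.Eventually.of_forall (hfle N))
      (by rw [lintegral_one]; exact (measure_lt_top ρ _).ne)
    rw [hlim_int] at hrevF
    set h : X → ℝ≥0∞ := fun z => Filter.limsup (fun N => fN N z) atTop with hh
    have hhmeas : Measurable h := measurable_limsupENN hfmeas
    have hne : ¬ (h =ᵐ[ρ] 0) := by
      intro hae
      have hz : ∫⁻ z, h z ∂ρ = 0 := by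
        rw [lintegral_congr_ae hae]; simp
      rw [hh] at hz
      rw [hz] at hrevF
      exact hpos (le_antisymm hrevF (zero_le))
    have hW : ρ {z | h z ≠ 0} ≠ 0 := by
      intro h0
      apply hne
      rw [Filter.EventuallyEq, ae_iff]
      simpa using h0
    have hWmeas : MeasurableSet {z | h z ≠ 0} :=
      (hhmeas (measurableSet_singleton 0)).compl
    have hWA : ({z | h z ≠ 0} ∩ A).Nonempty := by
      rw [Set.nonempty_iff_ne_empty]
      intro hemp
      apply hW
      rw [hρ, Measure.restrict_apply hWmeas, hemp, measure_empty]
    obtain ⟨z, hzW, hzA⟩ := hWA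
    apply hzW
    have hle : h z ≤ e V z := by
      have heq : e V z = Filter.limsup
          (fun N => ⨆ m : ℕ, (cnt {n | T^[n] z ∈ V} m N : ℝ≥0∞) / (N : ℝ≥0∞)) atTop := rfl
      rw [heq, hh]
      refine limsup_le_limsup (Filter.Eventually.of_forall fun N => ?_)
        (by isBoundedDefault) (by isBoundedDefault)
      show fN N z ≤ ⨆ m : ℕ, (cnt {n | T^[n] z ∈ V} m N : ℝ≥0∞) / (N : ℝ≥0∞)
      have heq2 : fN N z = (cnt {n | T^[n] z ∈ V} 0 N : ℝ≥0∞) / N := by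
        rw [hcnt_eq V z 0 N, hfN]
        simp only [zero_add]
      rw [heq2]
      exact le_iSup (fun m => (cnt {n | T^[n] z ∈ V} m N : ℝ≥0∞) / (N : ℝ≥0∞)) 0
    have hz0 : e V z = 0 := hzA
    simpa [hh] using le_antisymm (hle.trans hz0.le) (zero_le)
  set Bad := ⋃ V ∈ TopologicalSpace.countableBasis X, (V ∩ {z | e V z = 0}) with hBadDef
  have hBad : μ Bad = 0 := by
    rw [hBadDef]
    refine (measure_biUnion_null_iff (TopologicalSpace.countable_countableBasis X)).2
      fun V hV => hnull V (TopologicalSpace.isOpen_of_mem_countableBasis hV)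
  have hnsub : ¬ Y ⊆ Bad := by
    intro hsub
    have h4 : μ Y ≤ μ Bad := measure_mono hsub
    rw [hBad] at h4
    exact absurd (le_antisymm h4 (zero_le)) hY.ne'
  obtain ⟨y, hyY, hyBad⟩ := Set.not_subset.mp hnsub
  refine ⟨y, hyY, ?_⟩
  intro U hU hyU
  obtain ⟨V, hVb, hyV, hVU⟩ :=
    (TopologicalSpace.isBasis_countableBasis X).exists_subset_of_mem_open hyU hU
  have h1 : e V y ≠ 0 := by
    intro h0
    exact hyBad (Set.mem_biUnion hVb ⟨hyV, h0⟩)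
  have h2 : 0 < ubd {n | T^[n] y ∈ V} := ubd_pos_of_eDen h1
  have h3 : ubd {n | T^[n] y ∈ V} ≤ ubd {n | T^[n] y ∈ U} := ubd_mono fun n hn => hVU hn
  exact lt_of_lt_of_le h2 h3

lemma cnt_eq_sum_real (P : ℕ → Prop) (m N : ℕ) :
    (cnt {n | P n} m N : ℝ≥0∞).toReal =
      ∑ j ∈ Finset.range N, Set.indicator {k : ℕ | P (m + k)} (fun _ => (1:ℝ)) j := by
  rw [cnt_eq_sum P m N, ENNReal.toReal_sum]
  · refine Finset.sum_congr rfl fun j _ => ?_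
    by_cases h : j ∈ {k : ℕ | P (m + k)}
    · rw [Set.indicator_of_mem h, Set.indicator_of_mem h, ENNReal.toReal_one]
    · rw [Set.indicator_of_notMem h, Set.indicator_of_notMem h, ENNReal.toReal_zero]
  · intro j _
    by_cases h : j ∈ {k : ℕ | P (m + k)}
    · rw [Set.indicator_of_mem h]; exact ENNReal.one_ne_top
    · rw [Set.indicator_of_notMem h]; exact ENNReal.zero_ne_top

lemma cnt_real_eq_sum (P : ℕ → Prop) (m N : ℕ) :
    (cnt {n | P n} m N : ℝ) =
      ∑ j ∈ Finset.range N, Set.indicator {k : ℕ | P (m + k)} (fun _ => (1:ℝ)) j := by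
  rw [← cnt_eq_sum_real P m N]
  simp

theorem exists_invariant_measure {X : Type} [MetricSpace X] [CompactSpace X]
    {mX : MeasurableSpace X} [BorelSpace X]
    (T : X → X) (hT : Continuous T) (x : X) (F : Set ℕ) (hF : 0 < ubd F) :
    ∃ μ : Measure X, IsProbabilityMeasure μ ∧ (∀ s : Set X, MeasurableSet s → μ (T ⁻¹' s) = μ s) ∧
      0 < μ (closure ((fun n => T^[n] x) '' F)) := by
  classical
  obtain ⟨d, hd, hsel⟩ := ubd_pos_extract hF
  choose Nf mf hNk hdk using hsel
  set Y := closure ((fun n => T^[n] x) '' F) with hY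
  set 𝒰 : Ultrafilter ℕ := Ultrafilter.of atTop with h𝒰
  have h𝒰le : (𝒰 : Filter ℕ) ≤ atTop := Ultrafilter.of_le _
  set avg : C(X, ℝ) → ℕ → ℝ :=
    fun f k => (∑ n ∈ Finset.range (Nf k), f (T^[mf k + n] x)) / (Nf k) with havg
  have hNfpos : ∀ k, 0 < Nf k := fun k => lt_of_le_of_lt (Nat.zero_le _) (hNk k)
  have havg_bound : ∀ (f : C(X, ℝ)) (k : ℕ), avg f k ∈ Set.Icc (-‖f‖) ‖f‖ := by
    intro f k
    have hsum : |∑ n ∈ Finset.range (Nf k), f (T^[mf k + n] x)| ≤ (Nf k : ℝ) * ‖f‖ := by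
      calc |∑ n ∈ Finset.range (Nf k), f (T^[mf k + n] x)|
          ≤ ∑ n ∈ Finset.range (Nf k), |f (T^[mf k + n] x)| := Finset.abs_sum_le_sum_abs _ _
        _ ≤ ∑ _n ∈ Finset.range (Nf k), ‖f‖ := Finset.sum_le_sum fun n _ => by
            rw [← Real.norm_eq_abs]; exact f.norm_coe_le_norm _
        _ = (Nf k : ℝ) * ‖f‖ := by rw [Finset.sum_const, Finset.card_range, nsmul_eq_mul]
    have h2 : |avg f k| ≤ ‖f‖ := by
      rw [havg]
      simp only
      rw [abs_div, abs_of_nonneg (by positivity : (0:ℝ) ≤ (Nf k : ℝ))]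
      rw [div_le_iff₀ (by exact_mod_cast hNfpos k)]
      calc |∑ n ∈ Finset.range (Nf k), f (T^[mf k + n] x)| ≤ (Nf k : ℝ) * ‖f‖ := hsum
        _ = ‖f‖ * (Nf k : ℝ) := mul_comm _ _
    exact abs_le.mp h2
  have hex : ∀ f : C(X, ℝ), ∃ L, Tendsto (avg f) (𝒰 : Filter ℕ) (𝓝 L) := by
    intro f
    have hmem : Set.Icc (-‖f‖) ‖f‖ ∈ Filter.map (avg f) (𝒰 : Filter ℕ) :=
      Filter.mem_map.2 (Filter.univ_mem' fun k => havg_bound f k)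
    obtain ⟨L, _, hL⟩ := (isCompact_Icc (a := -‖f‖) (b := ‖f‖)).ultrafilter_le_nhds
      (𝒰.map (avg f)) (le_principal_iff.2 hmem)
    exact ⟨L, hL⟩
  set Lam : C(X, ℝ) → ℝ := fun f => (hex f).choose with hLamDef
  have hLam : ∀ f, Tendsto (avg f) (𝒰 : Filter ℕ) (𝓝 (Lam f)) := fun f => (hex f).choose_spec
  have hLam_mono : ∀ f g : C(X, ℝ), f ≤ g → Lam f ≤ Lam g := by
    intro f g hfg
    refine le_of_tendsto_of_tendsto (hLam f) (hLam g) (Filter.Eventually.of_forall fun k => ?_)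
    rw [havg]; simp only
    have hNpos : (0:ℝ) < (Nf k : ℝ) := by exact_mod_cast hNfpos k
    have hsum : (∑ n ∈ Finset.range (Nf k), f (T^[mf k + n] x)) ≤
        ∑ n ∈ Finset.range (Nf k), g (T^[mf k + n] x) :=
      Finset.sum_le_sum fun n _ => ContinuousMap.le_def.mp hfg _
    exact (div_le_div_iff_of_pos_right hNpos).mpr hsum
  have hLam_add : ∀ f g : C(X, ℝ), Lam (f + g) = Lam f + Lam g := by
    intro f g
    have h1 : avg (f + g) = fun k => avg f k + avg g k := by
      funext k
      rw [havg]; simp only [ContinuousMap.add_apply]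
      rw [Finset.sum_add_distrib, add_div]
    have h2 : Tendsto (avg (f + g)) (𝒰 : Filter ℕ) (𝓝 (Lam f + Lam g)) := by
      rw [h1]; exact (hLam f).add (hLam g)
    exact tendsto_nhds_unique (hLam (f + g)) h2
  have hLam_one : Lam 1 = 1 := by
    have h1 : avg 1 = fun _ => (1:ℝ) := by
      funext k
      rw [havg]; simp only [ContinuousMap.one_apply]
      rw [Finset.sum_const, Finset.card_range, nsmul_eq_mul, mul_one,
        div_self (by exact_mod_cast (hNfpos k).ne')]
    have h2 : Tendsto (avg 1) (𝒰 : Filter ℕ) (𝓝 1) := by rw [h1]; exact tendsto_const_nhds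
    exact tendsto_nhds_unique (hLam 1) h2
  have hLam_zero : Lam 0 = 0 := by
    have h1 : avg 0 = fun _ => (0:ℝ) := by
      funext k; rw [havg]; simp
    have h2 : Tendsto (avg 0) (𝒰 : Filter ℕ) (𝓝 0) := by rw [h1]; exact tendsto_const_nhds
    exact tendsto_nhds_unique (hLam 0) h2
  have hLam_nonneg : ∀ f : C(X, ℝ), 0 ≤ f → 0 ≤ Lam f := by
    intro f hf
    rw [← hLam_zero]; exact hLam_mono _ _ hf
  have hLam_comp : ∀ f : C(X, ℝ), Lam (f.comp ⟨T, hT⟩) = Lam f := by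
    intro f
    have hdiff : ∀ k, avg (f.comp ⟨T, hT⟩) k - avg f k =
        (f (T^[mf k + Nf k] x) - f (T^[mf k] x)) / (Nf k) := by
      intro k
      rw [havg]; simp only [ContinuousMap.comp_apply, ContinuousMap.coe_mk]
      rw [div_sub_div_same]
      congr 1
      have hpt : ∀ n : ℕ, f (T (T^[mf k + n] x)) = f (T^[mf k + (n+1)] x) := by
        intro n
        have harr : T^[mf k + (n+1)] x = T (T^[mf k + n] x) := by
          rw [← Nat.add_assoc]
          exact Function.iterate_succ_apply' T (mf k + n) x
        rw [harr]
      calc (∑ n ∈ Finset.range (Nf k), f (T (T^[mf k + n] x)))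
          - ∑ n ∈ Finset.range (Nf k), f (T^[mf k + n] x)
          = (∑ n ∈ Finset.range (Nf k), f (T^[mf k + (n+1)] x))
            - ∑ n ∈ Finset.range (Nf k), f (T^[mf k + n] x) := by
            congr 1
            exact Finset.sum_congr rfl fun n _ => hpt n
        _ = f (T^[mf k + Nf k] x) - f (T^[mf k + 0] x) := by
            have e1 : ∑ n ∈ Finset.range (Nf k + 1), f (T^[mf k + n] x)
                = (∑ n ∈ Finset.range (Nf k), f (T^[mf k + (n+1)] x)) + f (T^[mf k + 0] x) :=
              Finset.sum_range_succ' _ _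
            have e2 : ∑ n ∈ Finset.range (Nf k + 1), f (T^[mf k + n] x)
                = (∑ n ∈ Finset.range (Nf k), f (T^[mf k + n] x)) + f (T^[mf k + Nf k] x) :=
              Finset.sum_range_succ _ _
            linarith
        _ = f (T^[mf k + Nf k] x) - f (T^[mf k] x) := by rw [Nat.add_zero]
    have htend0 : Tendsto (fun k => avg (f.comp ⟨T, hT⟩) k - avg f k) atTop (𝓝 0) := by
      have hgt : Tendsto (fun k : ℕ => 2 * ‖f‖ * (1 / (k + 1 : ℝ))) atTop (𝓝 0) := by
        have := tendsto_one_div_add_atTop_nhds_zero_nat.const_mul (2 * ‖f‖)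
        simpa using this
      refine squeeze_zero_norm (fun k => ?_) hgt
      ·
        rw [hdiff k, Real.norm_eq_abs, abs_div,
          abs_of_nonneg (by positivity : (0:ℝ) ≤ (Nf k : ℝ))]
        have hnum : |f (T^[mf k + Nf k] x) - f (T^[mf k] x)| ≤ 2 * ‖f‖ := by
          calc |f (T^[mf k + Nf k] x) - f (T^[mf k] x)|
              ≤ |f (T^[mf k + Nf k] x)| + |f (T^[mf k] x)| := abs_sub _ _
            _ ≤ ‖f‖ + ‖f‖ := add_le_add
                (by rw [← Real.norm_eq_abs]; exact f.norm_coe_le_norm _)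
                (by rw [← Real.norm_eq_abs]; exact f.norm_coe_le_norm _)
            _ = 2 * ‖f‖ := by ring
        have hk1 : (k + 1 : ℝ) ≤ (Nf k : ℝ) := by exact_mod_cast hNk k
        have hk1pos : (0:ℝ) < k + 1 := by positivity
        calc |f (T^[mf k + Nf k] x) - f (T^[mf k] x)| / (Nf k : ℝ)
            ≤ (2 * ‖f‖) / (Nf k : ℝ) := by gcongr
          _ ≤ (2 * ‖f‖) / (k + 1 : ℝ) := by
              have h2f : (0:ℝ) ≤ 2 * ‖f‖ := by positivity
              exact div_le_div_of_nonneg_left h2f hk1pos hk1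
          _ = 2 * ‖f‖ * (1 / (k + 1 : ℝ)) := by ring
    have htend0' : Tendsto (fun k => avg (f.comp ⟨T, hT⟩) k - avg f k) (𝒰 : Filter ℕ) (𝓝 0) :=
      htend0.mono_left h𝒰le
    have h2 : Tendsto (avg (f.comp ⟨T, hT⟩)) (𝒰 : Filter ℕ) (𝓝 (Lam f)) := by
      have := htend0'.add (hLam f)
      simpa using this
    exact tendsto_nhds_unique (hLam (f.comp ⟨T, hT⟩)) h2
  have hLam_vanish : ∀ f : C(X, ℝ), (∀ z, f z ∈ Set.Icc (0:ℝ) 1) → (∀ z ∈ Y, f z = 0) →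
      Lam f ≤ 1 - d := by
    intro f hicc hvan
    refine le_of_tendsto (hLam f) (Filter.Eventually.of_forall fun k => ?_)
    rw [havg]; simp only
    have hNpos : (0:ℝ) < (Nf k : ℝ) := by exact_mod_cast hNfpos k
    rw [div_le_iff₀ hNpos]
    have hsum_le : (∑ n ∈ Finset.range (Nf k), f (T^[mf k + n] x)) ≤
        (Nf k : ℝ) - (cnt F (mf k) (Nf k) : ℝ) := by
      have hcnt := cnt_real_eq_sum (fun n => n ∈ F) (mf k) (Nf k)
      have hFset : {n | n ∈ F} = F := rfl
      rw [hFset] at hcnt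
      have : (∑ n ∈ Finset.range (Nf k), f (T^[mf k + n] x)) ≤
          ∑ j ∈ Finset.range (Nf k),
            (1 - Set.indicator {i : ℕ | (mf k + i) ∈ F} (fun _ => (1:ℝ)) j) := by
        refine Finset.sum_le_sum fun j _ => ?_
        by_cases hj : (mf k + j) ∈ F
        · rw [Set.indicator_of_mem (by exact hj)]
          have : T^[mf k + j] x ∈ Y :=
            subset_closure ⟨mf k + j, hj, rfl⟩
          rw [hvan _ this]
          norm_num
        · rw [Set.indicator_of_notMem (by exact hj)]
          have := (hicc (T^[mf k + j] x)).2
          linarith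
      rw [Finset.sum_sub_distrib, Finset.sum_const, Finset.card_range, nsmul_eq_mul,
        mul_one] at this
      rw [hcnt]
      exact this
    have hd' : d * (Nf k : ℝ) ≤ (cnt F (mf k) (Nf k) : ℝ) := hdk k
    calc (∑ n ∈ Finset.range (Nf k), f (T^[mf k + n] x))
        ≤ (Nf k : ℝ) - (cnt F (mf k) (Nf k) : ℝ) := hsum_le
      _ ≤ (Nf k : ℝ) - d * (Nf k : ℝ) := by linarith
      _ = (1 - d) * (Nf k : ℝ) := by ring
  -- the content
  set SK : Set X → Set C(X, ℝ) :=
    fun K => {f | (∀ z, f z ∈ Set.Icc (0:ℝ) 1) ∧ ∀ z ∈ K, f z = 1} with hSK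
  have hone_mem : ∀ K, (1 : C(X, ℝ)) ∈ SK K := by
    intro K
    constructor
    · intro z; simp [ContinuousMap.one_apply]
    · intro z _; simp [ContinuousMap.one_apply]
  have hSK_ne : ∀ K : Set X, (Lam '' SK K).Nonempty := fun K => ⟨Lam 1, 1, hone_mem K, rfl⟩
  have hSK_nonneg : ∀ (K : Set X) (f : C(X, ℝ)), f ∈ SK K → 0 ≤ Lam f := by
    intro K f hf
    refine hLam_nonneg f ?_
    intro z
    exact (hf.1 z).1
  have hbddK : ∀ K : Set X, BddBelow (Lam '' SK K) := by
    intro K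
    refine ⟨0, ?_⟩
    rintro r ⟨f, hf, rfl⟩
    exact hSK_nonneg K f hf
  set ell : Set X → ℝ := fun K => sInf (Lam '' SK K) with hell
  have hell_nonneg : ∀ K : Set X, 0 ≤ ell K := fun K =>
    le_csInf (hSK_ne K) (by rintro r ⟨f, hf, rfl⟩; exact hSK_nonneg K f hf)
  have hell_le : ∀ (K : Set X) (f : C(X, ℝ)), f ∈ SK K → ell K ≤ Lam f := by
    intro K f hf
    exact csInf_le (hbddK K) ⟨f, hf, rfl⟩
  have hell_mono : ∀ K₁ K₂ : Set X, K₁ ⊆ K₂ → ell K₁ ≤ ell K₂ := by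
    intro K₁ K₂ hsub
    refine csInf_le_csInf (hbddK K₁) (hSK_ne K₂) ?_
    rintro r ⟨f, hf, rfl⟩
    exact ⟨f, ⟨hf.1, fun z hz => hf.2 z (hsub hz)⟩, rfl⟩
  have hell_one : ∀ K : Set X, ell K ≤ 1 := by
    intro K
    have := hell_le K 1 (hone_mem K)
    rwa [hLam_one] at this
  have hell_union_le : ∀ K₁ K₂ : Set X, ell (K₁ ∪ K₂) ≤ ell K₁ + ell K₂ := by
    intro K₁ K₂
    refine le_of_forall_pos_le_add fun ε hε => ?_
    have h1 : ell K₁ < ell K₁ + ε / 2 := by linarith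
    have h2 : ell K₂ < ell K₂ + ε / 2 := by linarith
    obtain ⟨r₁, ⟨f₁, hf₁, rfl⟩, hr₁⟩ := exists_lt_of_csInf_lt (hSK_ne K₁) h1
    obtain ⟨r₂, ⟨f₂, hf₂, rfl⟩, hr₂⟩ := exists_lt_of_csInf_lt (hSK_ne K₂) h2
    have hmem : f₁ ⊔ f₂ ∈ SK (K₁ ∪ K₂) := by
      constructor
      · intro z
        rw [ContinuousMap.sup_apply]
        exact ⟨le_max_of_le_left (hf₁.1 z).1, max_le (hf₁.1 z).2 (hf₂.1 z).2⟩
      · rintro z (hz | hz)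
        · rw [ContinuousMap.sup_apply, hf₁.2 z hz]
          exact le_antisymm (max_le le_rfl (hf₂.1 z).2) (le_max_left _ _)
        · rw [ContinuousMap.sup_apply, hf₂.2 z hz]
          exact le_antisymm (max_le (hf₁.1 z).2 le_rfl) (le_max_right _ _)
    have hle : (f₁ ⊔ f₂ : C(X, ℝ)) ≤ f₁ + f₂ := by
      rw [ContinuousMap.le_def]
      intro z
      rw [ContinuousMap.sup_apply, ContinuousMap.add_apply]
      exact max_le (le_add_of_nonneg_right (hf₂.1 z).1) (le_add_of_nonneg_left (hf₁.1 z).1)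
    calc ell (K₁ ∪ K₂) ≤ Lam (f₁ ⊔ f₂) := hell_le _ _ hmem
      _ ≤ Lam (f₁ + f₂) := hLam_mono _ _ hle
      _ = Lam f₁ + Lam f₂ := hLam_add _ _
      _ ≤ (ell K₁ + ε / 2) + (ell K₂ + ε / 2) := add_le_add hr₁.le hr₂.le
      _ = ell K₁ + ell K₂ + ε := by ring
  have hell_disj : ∀ K₁ K₂ : Set X, Disjoint K₁ K₂ → IsClosed K₁ → IsClosed K₂ →
      ell K₁ + ell K₂ ≤ ell (K₁ ∪ K₂) := by
    intro K₁ K₂ hdisj hc₁ hc₂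
    refine le_csInf (hSK_ne _) ?_
    rintro r ⟨f, hf, rfl⟩
    obtain ⟨g, hg0, hg1, hgicc⟩ := exists_continuous_zero_one_of_isClosed hc₂ hc₁ hdisj.symm
    have hmem₁ : f * g ∈ SK K₁ := by
      constructor
      · intro z
        rw [ContinuousMap.mul_apply]
        exact ⟨mul_nonneg (hf.1 z).1 (hgicc z).1,
          mul_le_one₀ (hf.1 z).2 (hgicc z).1 (hgicc z).2⟩
      · intro z hz
        have h1 : f z = 1 := hf.2 z (Or.inl hz)
        have h2 : g z = 1 := by simpa using hg1 hz
        rw [ContinuousMap.mul_apply, h1, h2, one_mul]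
    have hmem₂ : f * (1 - g) ∈ SK K₂ := by
      constructor
      · intro z
        rw [ContinuousMap.mul_apply, ContinuousMap.sub_apply, ContinuousMap.one_apply]
        constructor
        · exact mul_nonneg (hf.1 z).1 (by linarith [(hgicc z).2])
        · exact mul_le_one₀ (hf.1 z).2 (by linarith [(hgicc z).2]) (by linarith [(hgicc z).1])
      · intro z hz
        have h1 : f z = 1 := hf.2 z (Or.inr hz)
        have h2 : g z = 0 := by simpa using hg0 hz
        rw [ContinuousMap.mul_apply, ContinuousMap.sub_apply, ContinuousMap.one_apply, h1, h2]
        norm_num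
    have hsplit : f * g + f * (1 - g) = f := by
      ext z
      simp only [ContinuousMap.add_apply, ContinuousMap.mul_apply, ContinuousMap.sub_apply,
        ContinuousMap.one_apply]
      ring
    calc ell K₁ + ell K₂ ≤ Lam (f * g) + Lam (f * (1 - g)) :=
          add_le_add (hell_le _ _ hmem₁) (hell_le _ _ hmem₂)
      _ = Lam (f * g + f * (1 - g)) := (hLam_add _ _).symm
      _ = Lam f := by rw [hsplit]
  set cont : Content X :=
    { toFun := fun K => ⟨ell K.1, hell_nonneg K.1⟩
      mono' := fun K₁ K₂ h => by
        show ell K₁.1 ≤ ell K₂.1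
        exact hell_mono _ _ h
      sup_disjoint' := fun K₁ K₂ hdisj h1 h2 => by
        apply NNReal.coe_injective
        show ell ((K₁ : Set X) ∪ (K₂ : Set X)) = ell (K₁ : Set X) + ell (K₂ : Set X)
        exact le_antisymm (hell_union_le _ _) (hell_disj _ _ hdisj h1 h2)
      sup_le' := fun K₁ K₂ => by
        show ell ((K₁ : Set X) ∪ (K₂ : Set X)) ≤ ell (K₁ : Set X) + ell (K₂ : Set X)
        exact hell_union_le _ _ } with hcont
  set μ : Measure X := cont.measure with hμ
  have hopen_eq : ∀ (U : Set X) (hU : IsOpen U), μ U = cont.innerContent ⟨U, hU⟩ := by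
    intro U hU
    rw [hμ, cont.measure_apply hU.measurableSet, cont.outerMeasure_of_isOpen U hU]
  have hinner_le : ∀ (U : Set X) (hU : IsOpen U) (c : ℝ≥0∞),
      (∀ K : TopologicalSpace.Compacts X, (K : Set X) ⊆ U → (cont.toFun K : ℝ≥0∞) ≤ c) →
      μ U ≤ c := by
    intro U hU c hc
    rw [hopen_eq U hU]
    rw [Content.innerContent]
    exact iSup₂_le fun K hK => hc K hK
  have hle_inner : ∀ (U : Set X) (hU : IsOpen U) (K : TopologicalSpace.Compacts X),
      (K : Set X) ⊆ U → (cont.toFun K : ℝ≥0∞) ≤ μ U := by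
    intro U hU K hK
    rw [hopen_eq U hU]
    exact cont.le_innerContent K ⟨U, hU⟩ hK
  -- probability measure
  have hell_univ : ell Set.univ = 1 := by
    refine le_antisymm (hell_one _) ?_
    refine le_csInf (hSK_ne _) ?_
    rintro r ⟨f, hf, rfl⟩
    have : f = 1 := ContinuousMap.ext fun z => by
      rw [hf.2 z (Set.mem_univ z)]; rfl
    rw [this, hLam_one]
  have hcont_univ : (cont.toFun ⟨Set.univ, isCompact_univ⟩ : ℝ≥0∞) = 1 := by
    have h1 : cont.toFun ⟨Set.univ, isCompact_univ⟩ = 1 := by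
      apply NNReal.coe_injective
      show ell Set.univ = ((1 : NNReal) : ℝ)
      rw [hell_univ]
      norm_num
    rw [h1]
    norm_num
  have hμuniv : μ Set.univ = 1 := by
    apply le_antisymm
    · refine hinner_le Set.univ isOpen_univ 1 fun K _ => ?_
      calc (cont.toFun K : ℝ≥0∞) ≤ (cont.toFun ⟨Set.univ, isCompact_univ⟩ : ℝ≥0∞) := by
            exact_mod_cast cont.mono' K ⟨Set.univ, isCompact_univ⟩ (Set.subset_univ _)
        _ = 1 := hcont_univ
    · have := hle_inner Set.univ isOpen_univ ⟨Set.univ, isCompact_univ⟩ (Set.subset_univ _)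
      rw [hcont_univ] at this
      exact this
  haveI hμprob : IsProbabilityMeasure μ := ⟨hμuniv⟩
  -- invariance on opens, first inequality
  have hopen_le : ∀ U : Set X, IsOpen U → μ U ≤ μ (T ⁻¹' U) := by
    intro U hU
    refine hinner_le U hU _ fun K hKU => ?_
    obtain ⟨W, hWopen, hKW, hclWU⟩ :=
      normal_exists_closure_subset K.isCompact.isClosed hU hKU
    have hdisjKW : Disjoint (Wᶜ : Set X) (K : Set X) :=
      Set.disjoint_left.2 fun z hz hzK => hz (hKW hzK)
    obtain ⟨f, hf0, hf1, hficc⟩ :=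
      exists_continuous_zero_one_of_isClosed hWopen.isClosed_compl K.isCompact.isClosed hdisjKW
    have hfSK : f ∈ SK K := ⟨hficc, fun z hz => hf1 hz⟩
    set g : C(X, ℝ) := f.comp ⟨T, hT⟩ with hg
    set K' : TopologicalSpace.Compacts X :=
      ⟨closure {z | g z ≠ 0}, isClosed_closure.isCompact⟩ with hK'
    have hK'sub : (K' : Set X) ⊆ T ⁻¹' U := by
      have h1 : {z | g z ≠ 0} ⊆ T ⁻¹' W := by
        intro z hz
        by_contra hzW
        exact hz (hf0 hzW)
      have h2 : closure {z | g z ≠ 0} ⊆ T ⁻¹' (closure W) :=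
        closure_minimal (h1.trans (Set.preimage_mono subset_closure))
          (IsClosed.preimage hT isClosed_closure)
      exact h2.trans (Set.preimage_mono hclWU)
    have hLamg_le : Lam g ≤ ell (K' : Set X) := by
      refine le_csInf (hSK_ne _) ?_
      rintro r ⟨h, hh, rfl⟩
      refine hLam_mono _ _ (ContinuousMap.le_def.mpr fun z => ?_)
      by_cases hz : g z = 0
      · exact le_trans (le_of_eq hz) (hh.1 z).1
      · have hzK' : z ∈ (K' : Set X) := subset_closure hz
        have h1 : h z = 1 := hh.2 z hzK'
        have h2 : g z ≤ 1 := (hficc (T z)).2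
        rw [h1]
        exact h2
    calc (cont.toFun K : ℝ≥0∞) ≤ (cont.toFun K' : ℝ≥0∞) := by
          rw [ENNReal.coe_le_coe, ← NNReal.coe_le_coe]
          show ell (K : Set X) ≤ ell (K' : Set X)
          calc ell (K : Set X) ≤ Lam f := hell_le _ _ hfSK
            _ = Lam g := (hLam_comp f).symm
            _ ≤ ell (K' : Set X) := hLamg_le
      _ ≤ μ (T ⁻¹' U) := hle_inner _ (hU.preimage hT) K' hK'sub
  -- closed sets
  have hclosed_le : ∀ C : Set X, IsClosed C → μ (T ⁻¹' C) ≤ μ C := by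
    intro C hC
    have h1 : μ Cᶜ ≤ μ (T ⁻¹' Cᶜ) := hopen_le _ hC.isOpen_compl
    have e1 : μ (T ⁻¹' C) + μ ((T ⁻¹' C)ᶜ) = 1 := by
      rw [measure_add_measure_compl (hT.measurable hC.measurableSet)]
      exact hμuniv
    have e2 : μ C + μ Cᶜ = 1 := by
      rw [measure_add_measure_compl hC.measurableSet]
      exact hμuniv
    have hpre : (T ⁻¹' C)ᶜ = T ⁻¹' Cᶜ := by rw [Set.preimage_compl]
    have key : μ (T ⁻¹' C) + μ Cᶜ ≤ μ C + μ Cᶜ := by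
      calc μ (T ⁻¹' C) + μ Cᶜ ≤ μ (T ⁻¹' C) + μ (T ⁻¹' Cᶜ) := add_le_add le_rfl h1
        _ = μ (T ⁻¹' C) + μ ((T ⁻¹' C)ᶜ) := by rw [hpre]
        _ = 1 := e1
        _ = μ C + μ Cᶜ := e2.symm
    exact ENNReal.le_of_add_le_add_right (lt_of_le_of_lt (measure_mono (Set.subset_univ _))
      (by rw [hμuniv]; exact ENNReal.one_lt_top)).ne key
  -- reverse inequality on opens
  have hopen_ge : ∀ U : Set X, IsOpen U → μ (T ⁻¹' U) ≤ μ U := by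
    intro U hU
    refine hinner_le _ (hU.preimage hT) _ fun K' hK' => ?_
    have h1 : (cont.toFun K' : ℝ≥0∞) ≤ μ (K' : Set X) := by
      rw [hμ, Content.measure_apply _ K'.isCompact.isClosed.measurableSet]
      exact cont.le_outerMeasure_compacts K'
    have h2 : μ (K' : Set X) ≤ μ (T ⁻¹' (T '' (K' : Set X))) :=
      measure_mono (Set.subset_preimage_image T _)
    have h3 : μ (T ⁻¹' (T '' (K' : Set X))) ≤ μ (T '' (K' : Set X)) :=
      hclosed_le _ (K'.isCompact.image hT).isClosed
    have h4 : μ (T '' (K' : Set X)) ≤ μ U :=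
      measure_mono (Set.image_subset_iff.2 hK')
    exact h1.trans (h2.trans (h3.trans h4))
  have hopen_inv : ∀ U : Set X, IsOpen U → μ (T ⁻¹' U) = μ U := fun U hU =>
    le_antisymm (hopen_ge U hU) (hopen_le U hU)
  -- full invariance
  haveI : IsProbabilityMeasure (μ.map T) :=
    Measure.isProbabilityMeasure_map hT.measurable.aemeasurable
  have hmapeq : μ.map T = μ := by
    refine ext_of_generate_finite {s : Set X | IsOpen s}
      (BorelSpace.measurable_eq (α := X)) ?_ ?_ ?_
    · intro s hs t ht _
      exact hs.inter ht
    · intro s hs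
      rw [Measure.map_apply hT.measurable hs.measurableSet]
      exact hopen_inv s hs
    · rw [Measure.map_apply hT.measurable MeasurableSet.univ, Set.preimage_univ]
  have hinv : ∀ s : Set X, MeasurableSet s → μ (T ⁻¹' s) = μ s := by
    intro s hs
    conv_rhs => rw [← hmapeq]
    rw [Measure.map_apply hT.measurable hs]
  -- positive mass on Y
  have hYc_le : μ Yᶜ ≤ ENNReal.ofReal (1 - d) := by
    have hYclosed : IsClosed Y := isClosed_closure
    refine hinner_le Yᶜ hYclosed.isOpen_compl _ fun K hKYc => ?_
    have hdisjKY : Disjoint Y (K : Set X) :=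
      Set.disjoint_left.2 fun z hz hzK => (hKYc hzK) hz
    obtain ⟨f, hf0, hf1, hficc⟩ :=
      exists_continuous_zero_one_of_isClosed hYclosed K.isCompact.isClosed hdisjKY
    have hfSK : f ∈ SK (K : Set X) := ⟨hficc, fun z hz => hf1 hz⟩
    have hLamf : Lam f ≤ 1 - d := hLam_vanish f hficc (fun z hz => hf0 hz)
    have hellK : ell (K : Set X) ≤ 1 - d := (hell_le _ _ hfSK).trans hLamf
    calc (cont.toFun K : ℝ≥0∞) ≤ ENNReal.ofReal (ell (K : Set X)) := by
          rw [ENNReal.ofReal, ENNReal.coe_le_coe]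
          rw [← NNReal.coe_le_coe, Real.coe_toNNReal']
          exact le_max_left _ _
      _ ≤ ENNReal.ofReal (1 - d) := ENNReal.ofReal_le_ofReal hellK
  have hYpos : 0 < μ Y := by
    by_contra hzero
    push_neg at hzero
    have hY0 : μ Y = 0 := le_antisymm hzero (zero_le)
    have hsum : μ Y + μ Yᶜ = 1 := by
      rw [measure_add_measure_compl isClosed_closure.measurableSet]
      exact hμuniv
    rw [hY0, zero_add] at hsum
    have : (1:ℝ≥0∞) ≤ ENNReal.ofReal (1 - d) := hsum ▸ hYc_le
    have hlt : ENNReal.ofReal (1 - d) < 1 := by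
      rw [ENNReal.ofReal_lt_one]
      linarith
    exact absurd (lt_of_le_of_lt this hlt) (lt_irrefl _)
  exact ⟨μ, hμprob, hinv, hYpos⟩

theorem aux_recurrent {X : Type} [MetricSpace X] [CompactSpace X] (T : X → X) (hT : Continuous T)
    (x : X) (F : Set ℕ) (hF : 0 < ubd F) :
    ∃ y ∈ closure ((fun n => T^[n] x) '' F), FamRecurrent Fpubd T y := by
  letI : MeasurableSpace X := borel X
  haveI : BorelSpace X := ⟨rfl⟩
  obtain ⟨μ, hprob, hinv, hpos⟩ := exists_invariant_measure T hT x F hF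
  haveI := hprob
  exact exists_famRecurrent_of_invariant T hT μ hinv _ hpos

end BDaux
end BDauxSection

theorem stmt0 [CompactSpace X] (T : X → X) (hT : Continuous T) (hTs : Function.Surjective T)
    (x₀ : X) :
    (FamRecurrent Fpubd T x₀ ∧ ∀ x : X, FamRecurrent Fpubd T x → x = x₀) ↔
      ∀ x : X, ∀ U : Set X, IsOpen U → x₀ ∈ U → lbd {n : ℕ | T^[n] x ∈ U} = 1 := by
  constructor
  · rintro ⟨hrec, huniq⟩ x U hU hx₀U
    by_contra hne
    have hlt : lbd {n : ℕ | T^[n] x ∈ U} < 1 :=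
      lt_of_le_of_ne (BDaux.lbd_le_one _) hne
    have hubdF : 0 < ubd {n : ℕ | T^[n] x ∈ U}ᶜ := by
      rw [BDaux.ubd_compl]
      linarith
    obtain ⟨y, hyY, hyrec⟩ := BDaux.aux_recurrent T hT x _ hubdF
    have hy : y = x₀ := huniq y hyrec
    have hYsub : closure ((fun n => T^[n] x) '' {n : ℕ | T^[n] x ∈ U}ᶜ) ⊆ Uᶜ := by
      apply closure_minimal ?_ hU.isClosed_compl
      rintro z ⟨n, hn, rfl⟩
      exact hn
    exact (hYsub hyY) (hy ▸ hx₀U)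
  · intro h
    constructor
    · intro U hU hx₀U
      have h1 : lbd {n : ℕ | T^[n] x₀ ∈ U} = 1 := h x₀ U hU hx₀U
      show 0 < ubd {n : ℕ | T^[n] x₀ ∈ U}
      calc (0:ℝ) < 1 := one_pos
        _ = lbd {n : ℕ | T^[n] x₀ ∈ U} := h1.symm
        _ ≤ ubd {n : ℕ | T^[n] x₀ ∈ U} := BDaux.lbd_le_ubd _
    · intro x hxrec
      by_contra hxne
      have hdist : 0 < dist x x₀ := dist_pos.mpr hxne
      have hG : lbd {n : ℕ | T^[n] x ∈ Metric.ball x₀ (dist x x₀ / 2)} = 1 :=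
        h x _ Metric.isOpen_ball (Metric.mem_ball_self (by linarith))
      have hH : 0 < ubd {n : ℕ | T^[n] x ∈ Metric.ball x (dist x x₀ / 2)} :=
        hxrec _ Metric.isOpen_ball (Metric.mem_ball_self (by linarith))
      have hsub : {n : ℕ | T^[n] x ∈ Metric.ball x (dist x x₀ / 2)} ⊆
          {n : ℕ | T^[n] x ∈ Metric.ball x₀ (dist x x₀ / 2)}ᶜ := by
        intro n hn hnU
        have d1 : dist (T^[n] x) x < dist x x₀ / 2 := hn
        have d2 : dist (T^[n] x) x₀ < dist x x₀ / 2 := hnU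
        have := dist_triangle x (T^[n] x) x₀
        rw [dist_comm x (T^[n] x)] at this
        linarith
      have hle : ubd {n : ℕ | T^[n] x ∈ Metric.ball x (dist x x₀ / 2)} ≤
          ubd {n : ℕ | T^[n] x ∈ Metric.ball x₀ (dist x x₀ / 2)}ᶜ := BDaux.ubd_mono hsub
      rw [BDaux.ubd_compl, hG] at hle
      linarith
end

section
/- Let (X,T) be a transitive topological dynamical system and n ≥ 2. If there exists an essential n-sensitive tuple (x₁,…,xₙ) which is a minimal point of the product system (Xⁿ, T⁽ⁿ⁾), then (X,T) is broken {ℕ}-n-sensitive, i.e., blockily thickly n-sensitive: there is δ > 0 such that for every L ∈ ℕ and opene U there exist z₁,…,zₙ ∈ U and k ∈ ℕ with min_{i<j} d(T^{k+l}zᵢ, T^{k+l}zⱼ) > δ for all l = 0,1,…,L. -/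
/-! The orbit closure `K` of the minimal tuple `x` is compact, and its points have pairwise
distinct coordinates: if `zᵢ = zⱼ` for some `z ∈ K`, the whole orbit closure of `z`, which
contains `x` by minimality, lies in the closed set `{w | wᵢ = wⱼ}`. So the coordinates of points
of `K` stay `c`-apart for some `c > 0`. Given a block length `k`, sensitivity of `x` produces
points `yᵢ` in any opene `U` which, from some time `m` on, shadow the orbits of the `xᵢ` within
`c / 4` for `k` steps; along that block the `yᵢ` are then `c / 2`-apart. -/

open Filter Topology MeasureTheory

variable {X : Type} [MetricSpace X]

lemma prodMap_iterate (T : X → X) (n m : ℕ) (x : Fin n → X) (i : Fin n) :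
    (prodMap T n)^[m] x i = T^[m] (x i) := by
  induction m generalizing x with
  | zero => rfl
  | succ m ih => exact ih (prodMap T n x)

lemma MinimalPoint.injective_of_mem_closure_orbit {T : X → X} {n : ℕ} {x z : Fin n → X}
    (hmin : MinimalPoint (prodMap T n) x) (hinj : Function.Injective x)
    (hz : z ∈ closure (orbit (prodMap T n) x)) : Function.Injective z := by
  intro i j hzij
  refine hinj (closure_minimal ?_ (isClosed_eq (continuous_apply i) (continuous_apply j))
    (hmin z hz) : x ∈ {w : Fin n → X | w i = w j})
  rintro _ ⟨m, rfl⟩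
  simp [prodMap_iterate, hzij]

theorem IsCompact.exists_pos_le_dist_of_injective {ι : Type*} [Finite ι] {K : Set (ι → X)}
    (hK : IsCompact K) (hinj : ∀ z ∈ K, Function.Injective z) :
    ∃ c > 0, ∀ z ∈ K, ∀ i j, i ≠ j → c ≤ dist (z i) (z j) := by
  have hpair : ∀ i j, i ≠ j → ∀ᶠ c in 𝓝[>] (0 : ℝ), ∀ z ∈ K, c ≤ dist (z i) (z j) := by
    intro i j hij
    obtain ⟨c, hc, hle⟩ := hK.exists_forall_le'
      ((continuous_apply i).dist (continuous_apply j)).continuousOn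
      fun z hz => dist_pos.2 ((hinj z hz).ne hij)
    filter_upwards [Ioc_mem_nhdsGT hc] with c' hc' z hz using hc'.2.trans (hle z hz)
  have hall : ∀ᶠ c in 𝓝[>] (0 : ℝ), ∀ i j, i ≠ j → ∀ z ∈ K, c ≤ dist (z i) (z j) := by
    simp only [eventually_all]
    exact hpair
  obtain ⟨c, hc, hpos⟩ := (hall.and self_mem_nhdsWithin).exists
  exact ⟨c, hpos, fun z hz i j hij => hc i j hij z hz⟩

lemma SensitiveTuple.exists_shadowing {T : X → X} (hT : Continuous T) {n : ℕ} {x : Fin n → X}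
    (hx : SensitiveTuple T x) {ε : ℝ} (hε : 0 < ε) (k : ℕ) {U : Set X} (hU : IsOpen U)
    (hUne : U.Nonempty) :
    ∃ y : Fin n → X, (∀ i, y i ∈ U) ∧ ∃ m : ℕ, ∀ l ≤ k, ∀ i,
      dist (T^[m + l] (y i)) (T^[l] (x i)) < ε := by
  let V : Fin n → Set X := fun i =>
    ⋂ l ∈ Finset.range (k + 1), T^[l] ⁻¹' Metric.ball (T^[l] (x i)) ε
  have hV : ∀ i, IsOpen (V i) ∧ x i ∈ V i := fun i =>
    ⟨isOpen_biInter_finset fun l _ => Metric.isOpen_ball.preimage (hT.iterate l),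
      Set.mem_iInter₂.2 fun l _ => Metric.mem_ball_self hε⟩
  obtain ⟨y, hyU, m, hym⟩ := hx U hU hUne V hV
  refine ⟨y, hyU, m, fun l hl i => ?_⟩
  have hyl := Set.mem_iInter₂.1 (hym i) l (Finset.mem_range_succ_iff.2 hl)
  rwa [Set.mem_preimage, ← Function.iterate_add_apply, Nat.add_comm] at hyl

theorem stmt3_general [CompactSpace X] (T : X → X) (hT : Continuous T) (n : ℕ)
    (h : ∃ x : Fin n → X, EssentialSensitiveTuple T x ∧ MinimalPoint (prodMap T n) x) :
    BlockilyThickly T n := by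
  obtain ⟨x, ⟨hinj, hsens⟩, hmin⟩ := h
  obtain ⟨c, hc, hcle⟩ := (isClosed_closure (s := orbit (prodMap T n) x)).isCompact
    |>.exists_pos_le_dist_of_injective fun z hz => hmin.injective_of_mem_closure_orbit hinj hz
  refine ⟨c / 2, half_pos hc, fun k U hU hUne => ?_⟩
  obtain ⟨y, hyU, m, hy⟩ := hsens.exists_shadowing hT (by positivity : 0 < c / 4) k hU hUne
  refine ⟨y, hyU, m, fun l hl i j hij => ?_⟩
  have hxl : c ≤ dist (T^[l] (x i)) (T^[l] (x j)) := by
    simpa only [prodMap_iterate] using hcle _ (subset_closure ⟨l, rfl⟩) i j hij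
  have htri := dist_triangle4 (T^[l] (x i)) (T^[m + l] (y i)) (T^[m + l] (y j)) (T^[l] (x j))
  linarith [hy l hl i, hy l hl j, dist_comm (T^[l] (x i)) (T^[m + l] (y i))]

theorem stmt3 [CompactSpace X] (T : X → X) (hT : Continuous T) (hTs : Function.Surjective T)
    (htr : IsTransitiveSys T) (n : ℕ) (hn : 2 ≤ n)
    (h : ∃ x : Fin n → X, EssentialSensitiveTuple T x ∧ MinimalPoint (prodMap T n) x) :
    BlockilyThickly T n :=
  stmt3_general T hT n h
end

section
/- For any n ≥ 2 and any transitive system (X,T), broken F-n-sensitivity for any Furstenberg family F with {ℕ} ⊆ F ⊆ F_ps is equivalent to blockily thickly n-sensitivity. In particular, broken F_ps-n-sensitivity implies broken {ℕ}-n-sensitivity. -/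
/-! A piecewise syndetic set has, on arbitrarily long intervals, gaps bounded by a fixed `N`.
So separation along it gives, for every time of a long block, a separated time at most `N` steps
later, and uniform continuity of `T, T², …, T^N` pulls this back to uniform separation along the
whole block. Conversely, `{m | 1 ≤ m}` belongs to every family considered, and along it broken
sensitivity is blockily thick sensitivity. -/

open Filter Topology MeasureTheory

variable {X : Type} [MetricSpace X]

theorem UniformContinuous.exists_dist_iterate_lt {Y : Type*} [PseudoMetricSpace Y] {T : Y → Y}
    (hT : UniformContinuous T) (N : ℕ) {ε : ℝ} (hε : 0 < ε) :
    ∃ δ > 0, ∀ a b : Y, dist a b < δ → ∀ s ≤ N, dist (T^[s] a) (T^[s] b) < ε := by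
  have hequi : UniformEquicontinuous fun s : Fin (N + 1) => T^[s] :=
    uniformEquicontinuous_finite.2 fun s => UniformContinuous.iterate T s hT
  obtain ⟨δ, hδ, h⟩ := Metric.uniformEquicontinuous_iff.1 hequi ε hε
  exact ⟨δ, hδ, fun a b hab s hs => h a b hab ⟨s, by omega⟩⟩

theorem PiecewiseSyndetic.exists_bounded_gaps {F : Set ℕ} (hF : PiecewiseSyndetic F) :
    ∃ N : ℕ, ∀ k : ℕ, ∃ m ≥ 1, ∀ l ≤ k, ∃ j ∈ F, m + l ≤ j ∧ j ≤ m + l + N := by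
  obtain ⟨A, B, hA, ⟨N, hB⟩, rfl⟩ := hF
  refine ⟨N, fun k => ?_⟩
  obtain ⟨m, hm⟩ := hA (k + N + 1)
  refine ⟨m + 1, by omega, fun l hl => ?_⟩
  obtain ⟨j, hjB, hlj, hjl⟩ := hB (m + 1 + l)
  exact ⟨j, ⟨hm ⟨by omega, by omega⟩, hjB⟩, hlj, hjl⟩

theorem BrokenSensitive.blockilyThickly {T : X → X} (hT : UniformContinuous T)
    {S : Set (Set ℕ)} {n : ℕ} (hS : S ⊆ Fps) (h : BrokenSensitive T S n) :
    BlockilyThickly T n := by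
  obtain ⟨δ, hδ, F₀, hF₀, hsep⟩ := h
  obtain ⟨N, hgaps⟩ := PiecewiseSyndetic.exists_bounded_gaps (hS hF₀)
  obtain ⟨η, hη, hclose⟩ := hT.exists_dist_iterate_lt N hδ
  refine ⟨η / 2, half_pos hη, fun k U hU hUne => ?_⟩
  obtain ⟨m₁, hm₁, hblock⟩ := hgaps k
  obtain ⟨x, hxU, m, hx⟩ := hsep U hU hUne (m₁ + k + N)
  refine ⟨x, hxU, m + m₁, fun l hl i j hij => ?_⟩
  obtain ⟨t, htF, hlt, htl⟩ := hblock l hl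
  have hfar := hx t ⟨htF, by omega, by omega⟩ i j hij
  have hshift : ∀ y, T^[m + t] y = T^[t - (m₁ + l)] (T^[m + m₁ + l] y) := fun y => by
    rw [← Function.iterate_add_apply]
    congr 1
    omega
  by_contra! hnear
  rw [hshift, hshift] at hfar
  exact lt_asymm hfar (hclose _ _ (by linarith) _ (by omega))

theorem BlockilyThickly.brokenSensitive {T : X → X} {n : ℕ} {S : Set (Set ℕ)}
    (hS : {m : ℕ | 1 ≤ m} ∈ S) (h : BlockilyThickly T n) : BrokenSensitive T S n := by
  obtain ⟨δ, hδ, hsep⟩ := h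
  refine ⟨δ, hδ, _, hS, fun U hU hUne l => ?_⟩
  obtain ⟨x, hxU, m, hx⟩ := hsep l U hU hUne
  exact ⟨x, hxU, m, fun k hk => hx k hk.2.2⟩

theorem stmt6_general [CompactSpace X] (T : X → X) (hT : Continuous T) (n : ℕ)
    (S : Set (Set ℕ)) (hN : {m : ℕ | 1 ≤ m} ∈ S) (hsub : S ⊆ Fps) :
    (BrokenSensitive T S n ↔ BlockilyThickly T n) ∧
      (BrokenSensitive T Fps n →
        BrokenSensitive T ({({m : ℕ | 1 ≤ m})} : Set (Set ℕ)) n) := by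
  have hTu : UniformContinuous T := CompactSpace.uniformContinuous_of_continuous hT
  exact ⟨⟨(·.blockilyThickly hTu hsub), (·.brokenSensitive hN)⟩,
    fun h => (h.blockilyThickly hTu subset_rfl).brokenSensitive rfl⟩

theorem stmt6 [CompactSpace X] (T : X → X) (hT : Continuous T) (hTs : Function.Surjective T)
    (htr : IsTransitiveSys T) (n : ℕ) (hn : 2 ≤ n)
    (S : Set (Set ℕ)) (hfam : FursFamily S) (hN : {m : ℕ | 1 ≤ m} ∈ S) (hsub : S ⊆ Fps) :
    (BrokenSensitive T S n ↔ BlockilyThickly T n) ∧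
      (BrokenSensitive T Fps n →
        BrokenSensitive T ({({m : ℕ | 1 ≤ m})} : Set (Set ℕ)) n) :=
  stmt6_general T hT n S hN hsub
end

section
/- Let n ≥ 2 and let (X,T) be a topologically ergodic system containing n pairwise distinct minimal subsets M₁,…,Mₙ. Then (X,T) is broken F_ps-n-sensitive. -/
open Filter Topology MeasureTheory

variable {X : Type} [MetricSpace X]

/-
Pairwise disjoint compact sets have pairwise disjoint ε-thickenings for some ε > 0. By topological
ergodicity, for each minimal set Mᵢ the times at which some point of a given open set U follows Mᵢ
(i.e. stays in the ε/2-thickening of Mᵢ) for l consecutive steps form a syndetic set. Shifting these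
sets and intersecting them one at a time yields a single time m at which, for every i, a point xᵢ ∈ U
stays near Mᵢ during m, …, m + l; the points xᵢ are then ε/2-separated along that whole block, so
the full family ℕ already witnesses broken sensitivity.
-/

open Set Metric Function

lemma univ_mem_Fps : (univ : Set ℕ) ∈ Fps :=
  ⟨univ, univ, fun _ => ⟨0, subset_univ _⟩, ⟨0, fun k => ⟨k, trivial, le_rfl, by omega⟩⟩, by simp⟩

lemma Syndetic.mono {F F' : Set ℕ} (hF : Syndetic F) (h : F ⊆ F') : Syndetic F' := by
  obtain ⟨N, hN⟩ := hF
  refine ⟨N, fun k => ?_⟩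
  obtain ⟨j, hj, hkj, hjN⟩ := hN k
  exact ⟨j, h hj, hkj, hjN⟩

lemma exists_forall_mem_of_syndetic {ι : Type*} [Fintype ι] (S : ι → ℕ → Set ℕ)
    (hsynd : ∀ i L, Syndetic (S i L))
    (hshift : ∀ i L L' m t, m ∈ S i L' → L + t ≤ L' → m + t ∈ S i L) (L : ℕ) :
    ∃ m, ∀ i, m ∈ S i L := by
  classical
  suffices h : ∀ s : Finset ι, ∀ L, ∃ m, ∀ i ∈ s, m ∈ S i L by
    obtain ⟨m, hm⟩ := h Finset.univ L
    exact ⟨m, fun i => hm i (Finset.mem_univ i)⟩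
  intro s
  induction s using Finset.induction_on with
  | empty => exact fun _ => ⟨0, by simp⟩
  | insert a s _ ih =>
    intro L
    obtain ⟨N, hN⟩ := hsynd a L
    obtain ⟨m', hm'⟩ := ih (L + N)
    obtain ⟨j, hja, hm'j, hjN⟩ := hN m'
    refine ⟨j, Finset.forall_mem_insert _ _ _ |>.2 ⟨hja, fun i hi => ?_⟩⟩
    simpa [Nat.add_sub_cancel' hm'j] using hshift i L (L + N) m' (j - m') (hm' i hi) (by omega)

lemma exists_pos_pairwise_disjoint_thickening {α ι : Type*} [EMetricSpace α] [Finite ι]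
    {s : ι → Set α} (hs : ∀ i, IsCompact (s i)) (hd : Pairwise (Disjoint on s)) :
    ∃ ε > 0, Pairwise (Disjoint on fun i => thickening ε (s i)) := by
  have hev : ∀ i j, ∀ᶠ ε in 𝓝[>] (0 : ℝ),
      i ≠ j → Disjoint (thickening ε (s i)) (thickening ε (s j)) := by
    intro i j
    by_cases hij : i = j
    · exact .of_forall fun _ h => absurd hij h
    obtain ⟨δ, hδ, hdisj⟩ := (hd hij).exists_thickenings (hs i) (hs j).isClosed
    filter_upwards [Ioo_mem_nhdsGT hδ] with ε hε _
    exact hdisj.mono (thickening_mono hε.2.le _) (thickening_mono hε.2.le _)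
  obtain ⟨ε, hdisj, hε⟩ := ((eventually_all.2 fun i => eventually_all.2 (hev i)).and
    self_mem_nhdsWithin).exists
  exact ⟨ε, hε, fun i j => hdisj i j⟩

lemma half_le_dist_of_disjoint_thickening {α : Type*} [PseudoMetricSpace α] {ε : ℝ}
    {s t : Set α} (h : Disjoint (thickening ε s) (thickening ε t)) {y z : α}
    (hy : y ∈ thickening (ε / 2) s) (hz : z ∈ thickening (ε / 2) t) : ε / 2 ≤ dist y z := by
  by_contra! hyz
  obtain ⟨p, -, hyp⟩ := mem_thickening_iff.1 hy
  have hε : ε / 2 ≤ ε := by linarith [dist_nonneg (x := y) (y := p)]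
  have hyt : y ∈ thickening ε t := by
    simpa using thickening_thickening_subset (ε / 2) (ε / 2) t (mem_thickening_iff.2 ⟨z, hz, hyz⟩)
  exact h.ne_of_mem (thickening_mono hε s hy) hyt rfl

lemma IsMinimalSubset.disjoint_of_ne {T : X → X} {M M' : Set X} (hM : IsMinimalSubset T M)
    (hM' : IsMinimalSubset T M') (hne : M ≠ M') : Disjoint M M' := by
  by_contra h
  have hI := not_disjoint_iff_nonempty_inter.1 h
  have hcl := hM.2.1.inter hM'.2.1
  have hmaps := hM.2.2.1.inter_inter hM'.2.2.1
  exact hne ((hM.2.2.2 _ inter_subset_left hI hcl hmaps).symm.trans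
    (hM'.2.2.2 _ inter_subset_right hI hcl hmaps))

def stayTimes {α : Type*} (T : α → α) (U W : Set α) (L : ℕ) : Set ℕ :=
  {m | ∃ x ∈ U, ∀ k ≤ L, T^[m + k] x ∈ W}

lemma add_mem_stayTimes {α : Type*} {T : α → α} {U W : Set α} {L L' m t : ℕ}
    (hm : m ∈ stayTimes T U W L') (hLt : L + t ≤ L') : m + t ∈ stayTimes T U W L := by
  obtain ⟨x, hxU, hx⟩ := hm
  exact ⟨x, hxU, fun k hk => by simpa [Nat.add_assoc] using hx (t + k) (by omega)⟩

lemma TopologicallyErgodic.syndetic_stayTimes {T : X → X} (herg : TopologicallyErgodic T)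
    (hT : Continuous T) {U W M : Set X} (hU : IsOpen U) (hUne : U.Nonempty) (hW : IsOpen W)
    (hMne : M.Nonempty) (hMT : MapsTo T M M) (hMW : M ⊆ W) (L : ℕ) :
    Syndetic (stayTimes T U W L) := by
  set V := ⋂ k ∈ Iic L, T^[k] ⁻¹' W
  have hV : IsOpen V := (finite_Iic L).isOpen_biInter fun k _ => hW.preimage (hT.iterate k)
  obtain ⟨q, hq⟩ := hMne
  have hqV : q ∈ V := mem_iInter₂.2 fun k _ => hMW ((hMT.iterate k) hq)
  refine (herg V U hV ⟨q, hqV⟩ hU hUne).mono ?_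
  rintro m ⟨x, hxV, hxU⟩
  refine ⟨x, hxU, fun k hk => ?_⟩
  rw [Nat.add_comm, iterate_add_apply]
  exact mem_iInter₂.1 hxV k hk

theorem stmt9_general [CompactSpace X] (T : X → X) (hT : Continuous T)
    (n : ℕ) (herg : TopologicallyErgodic T)
    (M : Fin n → Set X) (hM : ∀ i, IsMinimalSubset T (M i)) (hinj : Function.Injective M) :
    BrokenSensitive T Fps n := by
  obtain ⟨ε, hε, hdisj⟩ := exists_pos_pairwise_disjoint_thickening
    (fun i => (hM i).2.1.isCompact) fun i j hij => (hM i).disjoint_of_ne (hM j) (hinj.ne hij)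
  refine ⟨ε / 4, by positivity, univ, univ_mem_Fps, fun U hU hUne l => ?_⟩
  obtain ⟨m, hm⟩ := exists_forall_mem_of_syndetic (fun i => stayTimes T U (thickening (ε / 2) (M i)))
    (fun i => herg.syndetic_stayTimes hT hU hUne isOpen_thickening (hM i).1 (hM i).2.2.1
      (self_subset_thickening (by positivity) _))
    (fun _ _ _ _ _ => add_mem_stayTimes) l
  choose x hxU hxW using hm
  refine ⟨x, hxU, m, fun k hk i j hij => ?_⟩
  calc ε / 4 < ε / 2 := by linarith
    _ ≤ _ := half_le_dist_of_disjoint_thickening (hdisj hij) (hxW i k hk.2.2) (hxW j k hk.2.2)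

theorem stmt9 [CompactSpace X] (T : X → X) (hT : Continuous T) (hTs : Function.Surjective T)
    (n : ℕ) (hn : 2 ≤ n) (herg : TopologicallyErgodic T)
    (M : Fin n → Set X) (hM : ∀ i, IsMinimalSubset T (M i)) (hinj : Function.Injective M) :
    BrokenSensitive T Fps n :=
  stmt9_general T hT n herg M hM hinj
end

section
/- Let (X,T) be a non-trivial weakly mixing system. Then for every n ≥ 2, (X,T) is broken F_inf-n-sensitive. -/
open Filter Topology MeasureTheory

variable {X : Type} [MetricSpace X]

/-!
Fix `n` distinct points `pᵢ` (a non-trivial weakly mixing system is infinite) and balls `Bᵢ`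
around them, so small that points of different balls are `δ`-apart. By Furstenberg's theorem the
product system on `Xⁿ` is transitive, so by Baire's theorem some `z ∈ Xⁿ` visits `∏ Bᵢ` at an
infinite set `F₀` of times. For a finite window `F₀ ∩ [1, l]` the set of points that follow `z`
into `∏ Bᵢ` at all those times is an open neighbourhood of `z`, and transitivity of the product
carries `Uⁿ` into it: the resulting tuple in `Uⁿ` is pairwise `δ`-separated along a shift of the
window.
-/

open Filter Topology Set Metric

section WeaklyMixing

variable {T : X → X}

lemma WeaklyMixing.infinite_setOf_inter_preimage_nonempty (hwm : WeaklyMixing T)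
    {U₁ V₁ U₂ V₂ : Set X} (hU₁ : IsOpen U₁) (hU₁ne : U₁.Nonempty) (hV₁ : IsOpen V₁)
    (hV₁ne : V₁.Nonempty) (hU₂ : IsOpen U₂) (hU₂ne : U₂.Nonempty) (hV₂ : IsOpen V₂)
    (hV₂ne : V₂.Nonempty) :
    {m : ℕ | (U₁ ∩ T^[m] ⁻¹' U₂).Nonempty ∧ (V₁ ∩ T^[m] ⁻¹' V₂).Nonempty}.Infinite := by
  refine (hwm (U₁ ×ˢ V₁) (U₂ ×ˢ V₂) (hU₁.prod hV₁) (hU₁ne.prod hV₁ne) (hU₂.prod hV₂)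
    (hU₂ne.prod hV₂ne)).mono ?_
  rintro m ⟨q, ⟨hq₁, hq₂⟩, hq⟩
  change q ∈ (Prod.map T T)^[m] ⁻¹' (U₂ ×ˢ V₂) at hq
  rw [Prod.map_iterate] at hq
  exact ⟨⟨q.1, hq₁, hq.1⟩, ⟨q.2, hq₂, hq.2⟩⟩

lemma WeaklyMixing.infinite [Nontrivial X] (hwm : WeaklyMixing T) : Infinite X := by
  by_contra hfin
  have : Finite X := not_infinite_iff_finite.mp hfin
  obtain ⟨a, b, hab⟩ := exists_pair_ne X
  obtain ⟨m, ⟨_, rfl, hma⟩, ⟨_, rfl, hmb⟩⟩ := (hwm.infinite_setOf_inter_preimage_nonempty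
    (isOpen_discrete {a}) (singleton_nonempty a) (isOpen_discrete {a}) (singleton_nonempty a)
    (isOpen_discrete {a}) (singleton_nonempty a) (isOpen_discrete {b})
    (singleton_nonempty b)).nonempty
  exact hab ((mem_singleton_iff.mp hma).symm.trans (mem_singleton_iff.mp hmb))

lemma WeaklyMixing.exists_open_pair_hittingTimes_subset [Nonempty X] (hT : Continuous T)
    (hwm : WeaklyMixing T) {ι : Type*} (s : Finset ι) {U V : ι → Set X}
    (hU : ∀ i, IsOpen (U i)) (hUne : ∀ i, (U i).Nonempty)
    (hV : ∀ i, IsOpen (V i)) (hVne : ∀ i, (V i).Nonempty) :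
    ∃ U' V' : Set X, IsOpen U' ∧ U'.Nonempty ∧ IsOpen V' ∧ V'.Nonempty ∧
      ∀ m, (U' ∩ T^[m] ⁻¹' V').Nonempty → ∀ i ∈ s, (U i ∩ T^[m] ⁻¹' V i).Nonempty := by
  classical
  induction s using Finset.induction_on with
  | empty =>
    exact ⟨univ, univ, isOpen_univ, univ_nonempty, isOpen_univ, univ_nonempty,
      fun _ _ i hi => absurd hi (Finset.notMem_empty i)⟩
  | insert j s _ ih =>
    obtain ⟨U', V', hU', hU'ne, hV', hV'ne, hsub⟩ := ih
    obtain ⟨r, hrU, hrV⟩ := (hwm.infinite_setOf_inter_preimage_nonempty hU' hU'ne hV' hV'ne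
      (hU j) (hUne j) (hV j) (hVne j)).nonempty
    -- Shrinking `U'` and `V'` to the points sent into `U j`, `V j` at time `r` shifts hitting
    -- times of the new pair into hitting times of `(U j, V j)`.
    refine ⟨U' ∩ T^[r] ⁻¹' U j, V' ∩ T^[r] ⁻¹' V j, hU'.inter ((hU j).preimage (hT.iterate r)),
      hrU, hV'.inter ((hV j).preimage (hT.iterate r)), hrV, ?_⟩
    rintro m ⟨x, ⟨hxU', hxU⟩, hxV', hxV⟩ i hi
    rcases Finset.mem_insert.mp hi with rfl | hi
    · refine ⟨T^[r] x, hxU, ?_⟩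
      rwa [mem_preimage, ← Function.iterate_add_apply, add_comm, Function.iterate_add_apply]
    · exact hsub m ⟨x, hxU', hxV'⟩ i hi

lemma iterate_prodMap {α : Type} (T : α → α) (n k : ℕ) : (prodMap T n)^[k] = prodMap T^[k] n :=
  Pi.map_iterate (fun _ => T) k

lemma continuous_prodMap (hT : Continuous T) (n : ℕ) : Continuous (prodMap T n) :=
  continuous_pi fun i => hT.comp (continuous_apply i)

theorem WeaklyMixing.isTransitiveSys_prodMap [Nonempty X] (hT : Continuous T)
    (hwm : WeaklyMixing T) (n : ℕ) : IsTransitiveSys (prodMap T n) := by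
  intro V W hV hVne hW hWne
  obtain ⟨v, hv⟩ := hVne
  obtain ⟨w, hw⟩ := hWne
  obtain ⟨r, hr, hrV⟩ := isOpen_iff.mp hV v hv
  obtain ⟨s, hs, hsW⟩ := isOpen_iff.mp hW w hw
  obtain ⟨U', V', hU', hU'ne, hV', hV'ne, hsub⟩ :=
    hwm.exists_open_pair_hittingTimes_subset hT (Finset.univ : Finset (Fin n))
      (U := fun i => ball (v i) r) (V := fun i => ball (w i) s)
      (fun _ => isOpen_ball) (fun _ => nonempty_ball.mpr hr)
      (fun _ => isOpen_ball) (fun _ => nonempty_ball.mpr hs)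
  refine (hwm.infinite_setOf_inter_preimage_nonempty hU' hU'ne hU' hU'ne hV' hV'ne hV'
    hV'ne).mono ?_
  rintro m ⟨hm, -⟩
  choose y hyv hyw using fun i => hsub m hm i (Finset.mem_univ i)
  refine ⟨y, hrV ?_, hsW ?_⟩
  · rw [ball_pi v hr]
    exact fun i _ => hyv i
  · rw [iterate_prodMap, ball_pi w hs]
    exact fun i _ => hyw i

end WeaklyMixing

section Transitive

variable {Y : Type} [MetricSpace Y] {f : Y → Y}

theorem IsTransitiveSys.exists_infinite_setOf_iterate_mem [BaireSpace Y] (hf : Continuous f)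
    (ht : IsTransitiveSys f) {B : Set Y} (hB : IsOpen B) (hBne : B.Nonempty) :
    ∃ z, {k | f^[k] z ∈ B}.Infinite := by
  have : Nonempty Y := hBne.to_subtype.map Subtype.val
  let visitsAfter : ℕ → Set Y := fun N => ⋃ k > N, f^[k] ⁻¹' B
  have hopen : ∀ N, IsOpen (visitsAfter N) :=
    fun N => isOpen_biUnion fun k _ => hB.preimage (hf.iterate k)
  have hdense : ∀ N, Dense (visitsAfter N) := by
    refine fun N => dense_iff_inter_open.mpr fun V hV hVne => ?_
    obtain ⟨k, ⟨x, hxV, hxB⟩, hNk⟩ := (ht V B hV hVne hB hBne).exists_gt N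
    exact ⟨x, hxV, mem_biUnion hNk hxB⟩
  obtain ⟨z, hz⟩ := (dense_iInter_of_isOpen_nat hopen hdense).nonempty
  refine ⟨z, infinite_of_forall_exists_gt fun N => ?_⟩
  obtain ⟨k, hNk, hk⟩ := mem_iUnion₂.mp (mem_iInter.mp hz N)
  exact ⟨k, hk, hNk⟩

lemma IsTransitiveSys.exists_mem_forall_iterate_add_mem (hf : Continuous f)
    (ht : IsTransitiveSys f) {B : Set Y} (hB : IsOpen B) {S : Set ℕ} (hS : S.Finite) {z : Y}
    (hz : ∀ k ∈ S, f^[k] z ∈ B) {V : Set Y} (hV : IsOpen V) (hVne : V.Nonempty) :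
    ∃ y ∈ V, ∃ m, ∀ k ∈ S, f^[m + k] y ∈ B := by
  let W := ⋂ k ∈ S, f^[k] ⁻¹' B
  have hW : IsOpen W := hS.isOpen_biInter fun k _ => hB.preimage (hf.iterate k)
  obtain ⟨m, y, hyV, hyW⟩ := (ht V W hV hVne hW ⟨z, mem_iInter₂.mpr hz⟩).nonempty
  refine ⟨y, hyV, m, fun k hk => ?_⟩
  rw [add_comm, Function.iterate_add_apply]
  exact mem_iInter₂.mp hyW k hk

end Transitive

lemma exists_pos_forall_lt_dist_of_mem_ball {ι : Type*} [Finite ι] {p : ι → X}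
    (hp : Function.Injective p) :
    ∃ δ > 0, ∀ i j, i ≠ j → ∀ a ∈ ball (p i) δ, ∀ b ∈ ball (p j) δ, δ < dist a b := by
  have hsmall : ∀ᶠ δ in 𝓝 (0 : ℝ), ∀ i j, i ≠ j → 3 * δ < dist (p i) (p j) := by
    refine eventually_all.mpr fun i => eventually_all.mpr fun j => ?_
    by_cases hij : i = j
    · simp [hij]
    have h3 : Tendsto (fun δ : ℝ => 3 * δ) (𝓝 0) (𝓝 0) := by
      simpa using (continuous_const_mul (3 : ℝ)).tendsto 0
    exact (h3.eventually (eventually_lt_nhds (dist_pos.mpr (hp.ne hij)))).mono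
      fun δ hδ _ => hδ
  obtain ⟨δ, hδ, hδpos⟩ :=
    ((hsmall.filter_mono nhdsWithin_le_nhds).and (self_mem_nhdsWithin (s := Ioi 0))).exists
  refine ⟨δ, hδpos, fun i j hij a ha b hb => ?_⟩
  have := dist_triangle4 (p i) a b (p j)
  rw [mem_ball'] at ha
  rw [mem_ball] at hb
  linarith [hδ i j hij]

theorem stmt11_general [CompactSpace X] (T : X → X) (hT : Continuous T)
    (hwm : WeaklyMixing T) (hnt : ∃ a b : X, a ≠ b) (n : ℕ) :
    BrokenSensitive T Finf n := by
  have : Nontrivial X := ⟨hnt⟩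
  have : Infinite X := hwm.infinite
  let p : Fin n → X := fun i => Infinite.natEmbedding X i
  have hp : Function.Injective p := fun i j h =>
    Fin.val_injective ((Infinite.natEmbedding X).injective h)
  obtain ⟨δ, hδ, hsep⟩ := exists_pos_forall_lt_dist_of_mem_ball hp
  let B : Set (Fin n → X) := univ.pi fun i => ball (p i) δ
  have hB : IsOpen B := isOpen_set_pi finite_univ fun i _ => isOpen_ball
  have htr := hwm.isTransitiveSys_prodMap hT n
  obtain ⟨z, hz⟩ := htr.exists_infinite_setOf_iterate_mem (continuous_prodMap hT n) hB
    ⟨p, fun i _ => mem_ball_self hδ⟩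
  refine ⟨δ, hδ, _, hz, fun U hU hUne l => ?_⟩
  obtain ⟨y, hyU, m, hy⟩ := htr.exists_mem_forall_iterate_add_mem (continuous_prodMap hT n) hB
    ((finite_Icc 1 l).inter_of_right _) (fun k hk => hk.1)
    (isOpen_set_pi finite_univ fun _ _ => hU) (univ_pi_nonempty_iff.mpr fun _ => hUne)
  refine ⟨y, fun i => hyU i (mem_univ i), m, fun k hk i j hij => ?_⟩
  have hyB := hy k hk
  rw [iterate_prodMap] at hyB
  exact hsep i j hij _ (hyB i (mem_univ i)) _ (hyB j (mem_univ j))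

theorem stmt11 [CompactSpace X] (T : X → X) (hT : Continuous T) (hTs : Function.Surjective T)
    (hwm : WeaklyMixing T) (hnt : ∃ a b : X, a ≠ b) (n : ℕ) (hn : 2 ≤ n) :
    BrokenSensitive T Finf n :=
  stmt11_general T hT hwm hnt n
end

section
/- Let (X,T) be a non-trivial weakly mixing M-system. Then for every n ≥ 2, (X,T) is broken F_ps-n-sensitive. -/
open Filter Topology MeasureTheory

variable {X : Type} [MetricSpace X]

section Aux
set_option linter.unusedSectionVars false
set_option linter.unnecessarySimpa false

lemma pi_iterate (T : X → X) (n : ℕ) (k : ℕ) (x : Fin n → X) :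
    (prodMap T n)^[k] x = fun i => T^[k] (x i) := by
  induction k with
  | zero => rfl
  | succ k ih =>
      rw [Function.iterate_succ_apply', ih]
      funext i
      simp [prodMap, Function.iterate_succ_apply']

lemma prod_iterate (T : X → X) (k : ℕ) (p : X × X) :
    (fun p : X × X => (T p.1, T p.2))^[k] p = (T^[k] p.1, T^[k] p.2) := by
  induction k generalizing p with
  | zero => rfl
  | succ k ih =>
      rw [Function.iterate_succ_apply, ih]
      simp [Function.iterate_succ_apply]

lemma semiconj_iterate {Z : Type} (T : X → X) (S : Z → Z) (φ : X → Z)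
    (hc : ∀ x, φ (T x) = S (φ x)) (m : ℕ) (x : X) : φ (T^[m] x) = S^[m] (φ x) := by
  induction m generalizing x with
  | zero => rfl
  | succ m ih =>
      rw [Function.iterate_succ_apply, Function.iterate_succ_apply, ← hc, ih]

lemma minimal_factor {Z : Type} [MetricSpace Z] [CompactSpace X] (T : X → X) (S : Z → Z)
    (φ : X → Z) (hφ : Continuous φ) (hc : ∀ x, φ (T x) = S (φ x)) (p : X)
    (hp : MinimalPoint T p) : MinimalPoint S (φ p) := by
  intro y hy
  have horb : ∀ w : X, orbit S (φ w) = φ '' orbit T w := by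
    intro w
    ext z
    constructor
    · rintro ⟨m, rfl⟩
      exact ⟨T^[m] w, ⟨m, rfl⟩, (semiconj_iterate T S φ hc m w).symm ▸ rfl⟩
    · rintro ⟨_, ⟨m, rfl⟩, rfl⟩
      exact ⟨m, (semiconj_iterate T S φ hc m w).symm⟩
  have hclosed : IsClosed (φ '' closure (orbit T p)) :=
    (isClosed_closure.isCompact.image hφ).isClosed
  have hy' : y ∈ φ '' closure (orbit T p) := by
    have : closure (orbit S (φ p)) ⊆ φ '' closure (orbit T p) := by
      apply closure_minimal _ hclosed
      rw [horb]
      exact Set.image_mono subset_closure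
    exact this hy
  obtain ⟨w, hw, rfl⟩ := hy'
  have hpw : p ∈ closure (orbit T w) := hp w hw
  have : φ p ∈ φ '' closure (orbit T w) := ⟨p, hpw, rfl⟩
  have hsub : φ '' closure (orbit T w) ⊆ closure (orbit S (φ w)) := by
    rw [horb]
    exact (image_closure_subset_closure_image hφ).trans (by rfl)
  exact hsub this

lemma syndetic_return {Z : Type} [MetricSpace Z] [CompactSpace Z] (S : Z → Z)
    (hS : Continuous S) (u : Z) (hu : MinimalPoint S u) (W : Set Z) (hW : IsOpen W)
    (huW : u ∈ W) : Syndetic {k : ℕ | S^[k] u ∈ W} := by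
  by_contra hsyn
  rw [Syndetic] at hsyn
  push_neg at hsyn
  have hsyn' : ∀ N : ℕ, ∃ k : ℕ, ∀ j, k ≤ j → j ≤ k + N → S^[j] u ∉ W := by
    intro N
    obtain ⟨k, hk⟩ := hsyn N
    exact ⟨k, fun j h1 h2 hj => absurd (hk j hj h1) (by omega)⟩
  choose kk hkk using hsyn'
  obtain ⟨v, -, ψ, hψ, hconv⟩ := isCompact_univ.tendsto_subseq
    (x := fun N => S^[kk N] u) (fun N => Set.mem_univ _)
  have horbv : ∀ j : ℕ, S^[j] v ∈ Wᶜ := by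
    intro j
    have : Tendsto (fun N => S^[j] (S^[kk (ψ N)] u)) atTop (𝓝 (S^[j] v)) :=
      ((hS.iterate j).tendsto v).comp hconv
    refine hW.isClosed_compl.mem_of_tendsto this (Filter.eventually_atTop.2 ⟨j, fun N hN => ?_⟩)
    have hj : j ≤ ψ N := hN.trans (hψ.le_apply)
    have h2 := hkk (ψ N) (kk (ψ N) + j) (Nat.le_add_right _ _) (by omega)
    rw [Nat.add_comm, Function.iterate_add_apply] at h2
    exact h2
  have hv : v ∈ closure (orbit S u) := by
    refine mem_closure_of_tendsto hconv (Filter.Eventually.of_forall fun N => ?_)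
    exact ⟨kk (ψ N), rfl⟩
  have : u ∈ closure (orbit S v) := hu v hv
  have hsub : closure (orbit S v) ⊆ Wᶜ := by
    apply closure_minimal _ hW.isClosed_compl
    rintro _ ⟨j, rfl⟩
    exact horbv j
  exact (hsub this) huW

lemma periodic_contra [CompactSpace X] (T : X → X) (hT : Continuous T)
    (hwm : WeaklyMixing T) (hnt : ∃ a b : X, a ≠ b) (L : ℕ) (hL : 1 ≤ L)
    (hper : ∀ x : X, T^[L] x = x) : False := by
  obtain ⟨a, b, hab⟩ := hnt
  set h : X × X → ℝ := fun q => ∑ j ∈ Finset.range L, dist (T^[j] q.1) (T^[j] q.2) with hh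
  have hcont : Continuous h := by
    apply continuous_finset_sum
    intro j _
    exact (((hT.iterate j).comp continuous_fst).dist ((hT.iterate j).comp continuous_snd))
  have hinv : ∀ q : X × X, h (T q.1, T q.2) = h q := by
    rintro ⟨x, y⟩
    have key : ∀ j, (fun j => dist (T^[j] (T x)) (T^[j] (T y))) j
        = (fun j => dist (T^[j+1] x) (T^[j+1] y)) j := by
      intro j
      simp [Function.iterate_succ_apply]
    calc h (T x, T y) = ∑ j ∈ Finset.range L, dist (T^[j+1] x) (T^[j+1] y) := by
          apply Finset.sum_congr rfl
          intro j _
          simpa using key j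
      _ = (∑ j ∈ Finset.range (L+1), dist (T^[j] x) (T^[j] y)) - dist x y := by
          rw [Finset.sum_range_succ']
          simp
      _ = (∑ j ∈ Finset.range L, dist (T^[j] x) (T^[j] y)) + dist (T^[L] x) (T^[L] y)
            - dist x y := by rw [Finset.sum_range_succ]
      _ = h (x, y) := by rw [hper x, hper y]; simp [hh]
  have hinvS : ∀ (k : ℕ) (q : X × X),
      h ((fun p : X × X => (T p.1, T p.2))^[k] q) = h q := by
    intro k
    induction k with
    | zero => intro q; rfl
    | succ k ih =>
        intro q
        rw [Function.iterate_succ_apply]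
        rw [ih]
        exact hinv q
  have hpos : 0 < h (a, b) := by
    have h0 : dist a b ≤ h (a, b) := by
      have := Finset.single_le_sum (f := fun j => dist (T^[j] a) (T^[j] b))
        (s := Finset.range L) (fun i _ => dist_nonneg) (a := 0) (Finset.mem_range.2 hL)
      simpa [hh] using this
    have : 0 < dist a b := dist_pos.2 hab
    linarith
  have hzero : h (a, a) = 0 := by
    rw [hh]
    simp
  set c := h (a, b) / 2 with hc
  have hc0 : 0 < c := by positivity
  have hW2 : IsOpen {q : X × X | c < h q} := isOpen_lt continuous_const hcont
  have hW1 : IsOpen {q : X × X | h q < c} := isOpen_lt hcont continuous_const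
  have hinf := hwm {q : X × X | c < h q} {q : X × X | h q < c} hW2
    ⟨(a, b), by simp [hc]; linarith⟩ hW1 ⟨(a, a), by simp [hzero, hc0]⟩
  obtain ⟨k, ⟨q, hq1, hq2⟩⟩ := hinf.nonempty
  simp only [Set.mem_preimage, Set.mem_setOf_eq] at hq1 hq2
  rw [prod_iterate] at hq2
  have := hinvS k q
  rw [prod_iterate] at this
  linarith [hq2, this, hq1]

lemma exists_min_inj [CompactSpace X] (T : X → X) (hT : Continuous T)
    (hwm : WeaklyMixing T) (hdense : Dense {x : X | MinimalPoint T x})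
    (hnt : ∃ a b : X, a ≠ b) (n : ℕ) (hn : 2 ≤ n) :
    ∃ p : X, MinimalPoint T p ∧ ∃ c : Fin n → ℕ,
      Function.Injective (fun i => T^[c i] p) := by
  by_contra hcon
  push_neg at hcon
  set L := (2 * n).factorial with hLdef
  have hL1 : 1 ≤ L := Nat.factorial_pos _
  have hfix : ∀ p : X, MinimalPoint T p → T^[L] p = p := by
    intro p hp
    have hninj : ¬ Function.Injective (fun i : Fin n => T^[(i : ℕ)] p) :=
      hcon p hp (fun i : Fin n => (i : ℕ))
    rw [Function.not_injective_iff] at hninj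
    obtain ⟨i, j, hij, hne⟩ := hninj
    -- wlog i < j
    obtain ⟨A, B, hAB, hBn, hABeq⟩ : ∃ A B : ℕ, A < B ∧ B < n ∧ T^[A] p = T^[B] p := by
      rcases lt_or_gt_of_ne hne with hlt | hgt
      · exact ⟨i, j, (by exact_mod_cast hlt), j.isLt, hij⟩
      · exact ⟨j, i, (by exact_mod_cast hgt), i.isLt, hij.symm⟩
    -- q periodic point with period d
    set q := T^[A] p with hq
    set d := B - A with hd
    have hd1 : 1 ≤ d := by omega
    have hqper : T^[d] q = q := by
      conv_rhs => rw [hABeq]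
      rw [hq, ← Function.iterate_add_apply]
      have hdA : d + A = B := by omega
      rw [hdA]
    have hqmul : ∀ s : ℕ, T^[d * s] q = q := by
      intro s
      induction s with
      | zero => rfl
      | succ s ih =>
          rw [Nat.mul_succ, Function.iterate_add_apply, hqper]
          exact ih
    have horbq : ∀ m : ℕ, T^[m] q = T^[m % d] q := by
      intro m
      have hm : m % d + d * (m / d) = m := Nat.mod_add_div m d
      calc T^[m] q = T^[m % d + d * (m / d)] q := by rw [hm]
        _ = T^[m % d] (T^[d * (m / d)] q) := Function.iterate_add_apply _ _ _ _
        _ = T^[m % d] q := by rw [hqmul]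
    -- orbit of q is finite
    have horbfin : orbit T q ⊆ (fun r => T^[r] q) '' (Set.Iio d) := by
      rintro _ ⟨m, rfl⟩
      exact ⟨m % d, Nat.mod_lt _ (by omega), (horbq m).symm⟩
    have hfinset : ((fun r => T^[r] q) '' (Set.Iio d)).Finite :=
      (Set.finite_Iio d).image _
    have hclosed : IsClosed ((fun r => T^[r] q) '' (Set.Iio d)) := hfinset.isClosed
    have hqorb : q ∈ closure (orbit T p) := subset_closure ⟨A, rfl⟩
    have hpq : p ∈ closure (orbit T q) := hp q hqorb
    have hpmem : p ∈ (fun r => T^[r] q) '' (Set.Iio d) :=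
      (closure_minimal horbfin hclosed) hpq
    obtain ⟨r, hr, hrp⟩ := hpmem
    have hrd : r < d := hr
    -- p = T^[A + r] p
    have hper1 : T^[A + r] p = p := by
      rw [Nat.add_comm, Function.iterate_add_apply]
      exact hrp
    -- find t with 1 ≤ t ≤ 2n and T^[t] p = p
    obtain ⟨t, ht1, ht2, htp⟩ : ∃ t : ℕ, 1 ≤ t ∧ t ≤ 2 * n ∧ T^[t] p = p := by
      by_cases hA : A = 0
      · refine ⟨B, by omega, by omega, ?_⟩
        rw [← hABeq, hq, hA]
        simp
      · exact ⟨A + r, by omega, by omega, hper1⟩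
    have htL : t ∣ L := Nat.dvd_factorial (by omega) ht2
    obtain ⟨s, hs⟩ := htL
    have hmul : ∀ s : ℕ, T^[t * s] p = p := by
      intro s
      induction s with
      | zero => rfl
      | succ s ih =>
          rw [Nat.mul_succ, Function.iterate_add_apply, htp]
          exact ih
    rw [hs]
    exact hmul s
  -- fixed set is closed and dense
  have hclosed : IsClosed {x : X | T^[L] x = x} :=
    isClosed_eq (hT.iterate L) continuous_id
  have hdense' : Dense {x : X | T^[L] x = x} :=
    hdense.mono (fun x hx => hfix x hx)
  have hall : ∀ x : X, T^[L] x = x := by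
    intro x
    have h1 : closure {x : X | T^[L] x = x} = Set.univ := hdense'.closure_eq
    rw [hclosed.closure_eq] at h1
    have : x ∈ {x : X | T^[L] x = x} := by rw [h1]; trivial
    exact this
  exact periodic_contra T hT hwm hnt L hL1 hall

-- Furstenberg intersection
lemma furstenberg_pair [CompactSpace X] (T : X → X) (hT : Continuous T)
    (hwm : WeaklyMixing T) (U1 V1 U2 V2 : Set X) (hU1 : IsOpen U1) (hU1n : U1.Nonempty)
    (hV1 : IsOpen V1) (hV1n : V1.Nonempty) (hU2 : IsOpen U2) (hU2n : U2.Nonempty)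
    (hV2 : IsOpen V2) (hV2n : V2.Nonempty) :
    ∃ k : ℕ, (U1 ∩ T^[k] ⁻¹' U2).Nonempty ∧ (V1 ∩ T^[k] ⁻¹' V2).Nonempty := by
  have := hwm (U1 ×ˢ V1) (U2 ×ˢ V2) (hU1.prod hV1) (hU1n.prod hV1n)
    (hU2.prod hV2) (hU2n.prod hV2n)
  obtain ⟨k, ⟨q, hq1, hq2⟩⟩ := this.nonempty
  rw [Set.mem_preimage, prod_iterate] at hq2
  exact ⟨k, ⟨q.1, hq1.1, hq2.1⟩, ⟨q.2, hq1.2, hq2.2⟩⟩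

lemma furstenberg_inter [CompactSpace X] (T : X → X) (hT : Continuous T)
    (hwm : WeaklyMixing T) (hne : Nonempty X) :
    ∀ (r : ℕ) (P Q : Fin r → Set X), (∀ i, IsOpen (P i)) → (∀ i, (P i).Nonempty) →
    (∀ i, IsOpen (Q i)) → (∀ i, (Q i).Nonempty) →
    ∃ U V : Set X, IsOpen U ∧ U.Nonempty ∧ IsOpen V ∧ V.Nonempty ∧
      ∀ m : ℕ, (U ∩ T^[m] ⁻¹' V).Nonempty → ∀ i, (P i ∩ T^[m] ⁻¹' (Q i)).Nonempty := by
  intro r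
  induction r with
  | zero =>
      intro P Q _ _ _ _
      exact ⟨Set.univ, Set.univ, isOpen_univ, Set.univ_nonempty, isOpen_univ,
        Set.univ_nonempty, fun m _ i => i.elim0⟩
  | succ r ih =>
      intro P Q hPo hPn hQo hQn
      obtain ⟨U, V, hUo, hUn, hVo, hVn, hUV⟩ := ih (fun i => P i.succ) (fun i => Q i.succ)
        (fun i => hPo _) (fun i => hPn _) (fun i => hQo _) (fun i => hQn _)
      obtain ⟨k, hA, hB⟩ := furstenberg_pair T hT hwm U V (P 0) (Q 0) hUo hUn hVo hVn
        (hPo 0) (hPn 0) (hQo 0) (hQn 0)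
      refine ⟨U ∩ T^[k] ⁻¹' (P 0), V ∩ T^[k] ⁻¹' (Q 0),
        hUo.inter ((hT.iterate k).isOpen_preimage _ (hPo 0)),
        hA, hVo.inter ((hT.iterate k).isOpen_preimage _ (hQo 0)), hB, ?_⟩
      rintro m ⟨x, ⟨hxU, hxP⟩, hxV⟩
      rw [Set.mem_preimage] at hxV
      obtain ⟨hxV1, hxV2⟩ := hxV
      intro i
      refine Fin.cases ?_ ?_ i
      · have h0 : T^[k] (T^[m] x) ∈ Q 0 := hxV2
        rw [← Function.iterate_add_apply] at h0
        refine ⟨T^[k] x, hxP, ?_⟩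
        rw [Set.mem_preimage, ← Function.iterate_add_apply, Nat.add_comm m k]
        exact h0
      · intro i'
        exact hUV m ⟨x, hxU, hxV1⟩ i'

end Aux

theorem stmt12 [CompactSpace X] (T : X → X) (hT : Continuous T) (hTs : Function.Surjective T)
    (htr : IsTransitiveSys T) (hwm : WeaklyMixing T)
    (hdense : Dense {x : X | MinimalPoint T x}) (hnt : ∃ a b : X, a ≠ b)
    (n : ℕ) (hn : 2 ≤ n) :
    BrokenSensitive T Fps n := by
  obtain ⟨p, hp, c, hcinj⟩ := exists_min_inj T hT hwm hdense hnt n hn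
  set S := prodMap T n with hSdef
  set φ : X → (Fin n → X) := fun x i => T^[c i] x with hφdef
  have hφ : Continuous φ := continuous_pi fun i => hT.iterate (c i)
  have hcsemi : ∀ x, φ (T x) = S (φ x) := by
    intro x
    funext i
    show T^[c i] (T x) = T (T^[c i] x)
    rw [← Function.iterate_succ_apply, Function.iterate_succ_apply']
  have hu : MinimalPoint S (φ p) := minimal_factor T S φ hφ hcsemi p hp
  set u : Fin n → X := φ p with hudef
  have huinj : Function.Injective u := hcinj
  have hpair : ∀ i j : Fin n, i ≠ j → 0 < dist (u i) (u j) :=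
    fun i j h => dist_pos.2 fun e => h (huinj e)
  have h01 : ((⟨0, by omega⟩ : Fin n), (⟨1, by omega⟩ : Fin n)).1
      ≠ ((⟨0, by omega⟩ : Fin n), (⟨1, by omega⟩ : Fin n)).2 := by
    simp [Fin.ext_iff]
  set s : Finset (Fin n × Fin n) := Finset.univ.filter (fun ij => ij.1 ≠ ij.2) with hsdef
  have hs : s.Nonempty := ⟨_, Finset.mem_filter.2 ⟨Finset.mem_univ _, h01⟩⟩
  set D : ℝ := s.inf' hs (fun ij => dist (u ij.1) (u ij.2)) with hDdef
  have hD : 0 < D := by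
    rw [hDdef, Finset.lt_inf'_iff]
    intro ij hij
    exact hpair _ _ (Finset.mem_filter.1 hij).2
  have hDle : ∀ i j : Fin n, i ≠ j → D ≤ dist (u i) (u j) := by
    intro i j h
    rw [hDdef]
    exact Finset.inf'_le (fun ij : Fin n × Fin n => dist (u ij.1) (u ij.2))
      (b := (i, j)) (Finset.mem_filter.2 ⟨Finset.mem_univ (i, j), h⟩)
  set ε : ℝ := D / 4 with hεdef
  have hε : 0 < ε := by positivity
  set W : Set (Fin n → X) := ⋂ i : Fin n, {y : Fin n → X | dist (y i) (u i) < ε} with hWdef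
  have hWo : IsOpen W := isOpen_iInter_of_finite fun i =>
    isOpen_lt ((continuous_apply i).dist continuous_const) continuous_const
  have huW : u ∈ W := Set.mem_iInter.2 fun i => by simp [hε]
  have hScont : Continuous S := continuous_pi fun i => hT.comp (continuous_apply i)
  have hsynd : Syndetic {k : ℕ | S^[k] u ∈ W} := syndetic_return S hScont u hu W hWo huW
  set F₀ : Set ℕ := {k : ℕ | S^[k] u ∈ W} with hF₀def
  have hFps : F₀ ∈ Fps :=
    ⟨Set.univ, F₀, fun l => ⟨0, Set.subset_univ _⟩, hsynd, (Set.univ_inter F₀).symm⟩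
  refine ⟨ε, hε, F₀, hFps, ?_⟩
  intro U hUo hUn l
  set O : Fin n → Set X :=
    fun i => ⋂ k ∈ Finset.Icc 1 l, T^[k] ⁻¹' Metric.ball (T^[k] (u i)) (ε / 2) with hOdef
  have hOo : ∀ i, IsOpen (O i) := fun i =>
    isOpen_biInter_finset fun k _ => Metric.isOpen_ball.preimage (hT.iterate k)
  have hOn : ∀ i, (O i).Nonempty := by
    intro i
    refine ⟨u i, Set.mem_iInter₂.2 fun k _ => ?_⟩
    simp [Metric.mem_ball, hε]
  obtain ⟨U', V', hU'o, hU'n, hV'o, hV'n, hUV⟩ := furstenberg_inter T hT hwm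
    ⟨hnt.choose⟩ n (fun _ => U) O (fun _ => hUo) (fun _ => hUn) hOo hOn
  obtain ⟨m, hm⟩ := (htr U' V' hU'o hU'n hV'o hV'n).nonempty
  have hall := hUV m hm
  choose x hx using hall
  refine ⟨x, fun i => (hx i).1, m, ?_⟩
  rintro k ⟨hkF, hk1, hkl⟩ i j hij
  have hkW : S^[k] u ∈ W := hkF
  rw [pi_iterate] at hkW
  have hdist : ∀ a : Fin n, dist (T^[k] (u a)) (u a) < ε := by
    intro a
    have := Set.mem_iInter.1 hkW a
    exact this
  have hball : ∀ a : Fin n, T^[k] (T^[m] (x a)) ∈ Metric.ball (T^[k] (u a)) (ε / 2) := by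
    intro a
    have hOm : T^[m] (x a) ∈ O a := (hx a).2
    rw [hOdef] at hOm
    exact Set.mem_iInter₂.1 hOm k (Finset.mem_Icc.2 ⟨hk1, hkl⟩)
  have hiter : ∀ a : Fin n, T^[m + k] (x a) = T^[k] (T^[m] (x a)) := by
    intro a
    rw [Nat.add_comm, Function.iterate_add_apply]
  rw [hiter i, hiter j]
  have d1 : dist (T^[k] (T^[m] (x i))) (T^[k] (u i)) < ε / 2 := hball i
  have d2 : dist (T^[k] (T^[m] (x j))) (T^[k] (u j)) < ε / 2 := hball j
  have d3 : dist (T^[k] (u i)) (u i) < ε := hdist i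
  have d4 : dist (T^[k] (u j)) (u j) < ε := hdist j
  have d5 : D ≤ dist (u i) (u j) := hDle i j hij
  have t1 : dist (u i) (u j) ≤ dist (u i) (T^[k] (T^[m] (x i)))
      + dist (T^[k] (T^[m] (x i))) (T^[k] (T^[m] (x j)))
      + dist (T^[k] (T^[m] (x j))) (u j) := dist_triangle4 _ _ _ _
  have t2 : dist (u i) (T^[k] (T^[m] (x i))) ≤ dist (u i) (T^[k] (u i))
      + dist (T^[k] (u i)) (T^[k] (T^[m] (x i))) := dist_triangle _ _ _
  have t3 : dist (T^[k] (T^[m] (x j))) (u j) ≤ dist (T^[k] (T^[m] (x j))) (T^[k] (u j))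
      + dist (T^[k] (u j)) (u j) := dist_triangle _ _ _
  rw [dist_comm (u i) (T^[k] (u i))] at t2
  rw [dist_comm (T^[k] (u i)) (T^[k] (T^[m] (x i)))] at t2
  have hε4 : ε = D / 4 := hεdef
  linarith
end

section
/- Let (X,T) be a non-trivial weakly mixing E-system. Then for every n ≥ 2, (X,T) is broken F_pubd-n-sensitive. -/
open Filter Topology MeasureTheory

variable {X : Type} [MetricSpace X]

namespace Stmt13Aux
open scoped ENNReal NNReal

variable {X : Type} [MetricSpace X]

lemma iter_pair (T : X → X) : ∀ (m : ℕ) (p : X × X),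
    (fun p : X × X => (T p.1, T p.2))^[m] p = (T^[m] p.1, T^[m] p.2)
  | 0, p => rfl
  | (m+1), p => by
    rw [Function.iterate_succ_apply', iter_pair T m p, Function.iterate_succ_apply',
      Function.iterate_succ_apply']

lemma iter_pi {n : ℕ} (T : X → X) : ∀ (m : ℕ) (x : Fin n → X),
    (fun (y : Fin n → X) i => T (y i))^[m] x = fun i => T^[m] (x i)
  | 0, x => rfl
  | (m+1), x => by
    rw [Function.iterate_succ_apply', iter_pi T m x]
    funext i
    rw [Function.iterate_succ_apply']

lemma furst_step (T : X → X) (hT : Continuous T) (hwm : WeaklyMixing T)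
    {A₁ B₁ A₂ B₂ : Set X} (hA₁ : IsOpen A₁) (hA₁n : A₁.Nonempty)
    (hB₁ : IsOpen B₁) (hB₁n : B₁.Nonempty) (hA₂ : IsOpen A₂) (hA₂n : A₂.Nonempty)
    (hB₂ : IsOpen B₂) (hB₂n : B₂.Nonempty) :
    ∃ A B : Set X, IsOpen A ∧ A.Nonempty ∧ IsOpen B ∧ B.Nonempty ∧
      ∀ r : ℕ, (A ∩ T^[r] ⁻¹' B).Nonempty →
        (A₁ ∩ T^[r] ⁻¹' B₁).Nonempty ∧ (A₂ ∩ T^[r] ⁻¹' B₂).Nonempty := by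
  obtain ⟨m, hm⟩ := (hwm (A₁ ×ˢ B₁) (A₂ ×ˢ B₂) (hA₁.prod hB₁) (hA₁n.prod hB₁n)
    (hA₂.prod hB₂) (hA₂n.prod hB₂n)).nonempty
  obtain ⟨p, hp1, hp2⟩ := hm
  rw [Set.mem_preimage, iter_pair] at hp2
  obtain ⟨hpa, hpb⟩ := hp1
  obtain ⟨hqa, hqb⟩ := hp2
  refine ⟨A₁ ∩ T^[m] ⁻¹' A₂, B₁ ∩ T^[m] ⁻¹' B₂,
    hA₁.inter (hA₂.preimage (hT.iterate m)), ⟨p.1, hpa, hqa⟩,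
    hB₁.inter (hB₂.preimage (hT.iterate m)), ⟨p.2, hpb, hqb⟩, ?_⟩
  rintro r ⟨w, ⟨hw1, hw2⟩, hw3⟩
  rw [Set.mem_preimage] at hw3
  refine ⟨⟨w, hw1, hw3.1⟩, ⟨T^[m] w, hw2, ?_⟩⟩
  rw [Set.mem_preimage, ← Function.iterate_add_apply, add_comm, Function.iterate_add_apply]
  exact hw3.2

lemma furst_multi (T : X → X) (hT : Continuous T) (hwm : WeaklyMixing T) [Nonempty X] :
    ∀ (r : ℕ) (U V : Fin r → Set X), (∀ i, IsOpen (U i)) → (∀ i, (U i).Nonempty) →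
      (∀ i, IsOpen (V i)) → (∀ i, (V i).Nonempty) →
      ∃ A B : Set X, IsOpen A ∧ A.Nonempty ∧ IsOpen B ∧ B.Nonempty ∧
        ∀ m : ℕ, (A ∩ T^[m] ⁻¹' B).Nonempty → ∀ i, (U i ∩ T^[m] ⁻¹' V i).Nonempty := by
  intro r
  induction r with
  | zero =>
    intro U V _ _ _ _
    exact ⟨Set.univ, Set.univ, isOpen_univ, Set.univ_nonempty, isOpen_univ,
      Set.univ_nonempty, fun m _ i => i.elim0⟩
  | succ r ih =>
    intro U V hUo hUn hVo hVn
    obtain ⟨A', B', hA'o, hA'n, hB'o, hB'n, hAB'⟩ := ih (U ∘ Fin.succ) (V ∘ Fin.succ)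
      (fun i => hUo _) (fun i => hUn _) (fun i => hVo _) (fun i => hVn _)
    obtain ⟨A, B, hAo, hAn, hBo, hBn, hAB⟩ :=
      furst_step T hT hwm hA'o hA'n hB'o hB'n (hUo 0) (hUn 0) (hVo 0) (hVn 0)
    refine ⟨A, B, hAo, hAn, hBo, hBn, fun m hm i => ?_⟩
    obtain ⟨h1, h2⟩ := hAB m hm
    refine Fin.cases h2 (fun j => hAB' m h1 j) i

lemma prod_transitive (T : X → X) (hT : Continuous T) (htr : IsTransitiveSys T)
    (hwm : WeaklyMixing T) [Nonempty X]
    (r : ℕ) (U V : Fin r → Set X) (hUo : ∀ i, IsOpen (U i)) (hUn : ∀ i, (U i).Nonempty)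
    (hVo : ∀ i, IsOpen (V i)) (hVn : ∀ i, (V i).Nonempty) :
    ∃ m : ℕ, ∀ i, (U i ∩ T^[m] ⁻¹' V i).Nonempty := by
  obtain ⟨A, B, hAo, hAn, hBo, hBn, hAB⟩ := furst_multi T hT hwm r U V hUo hUn hVo hVn
  obtain ⟨m, hm⟩ := (htr A B hAo hAn hBo hBn).nonempty
  exact ⟨m, hAB m hm⟩

lemma infinite_of_wm (T : X → X) (hwm : WeaklyMixing T) (hnt : ∃ a b : X, a ≠ b) :
    Infinite X := by
  rw [← not_finite_iff_infinite]
  intro hfin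
  obtain ⟨a, b, hab⟩ := hnt
  obtain ⟨m, hm⟩ := (hwm {(a,a)} {(a,b)} (isOpen_discrete _) ⟨_, rfl⟩
    (isOpen_discrete _) ⟨_, rfl⟩).nonempty
  obtain ⟨p, hp1, hp2⟩ := hm
  rw [Set.mem_singleton_iff] at hp1
  subst hp1
  rw [Set.mem_preimage, iter_pair, Set.mem_singleton_iff, Prod.mk.injEq] at hp2
  exact hab (hp2.1.symm.trans hp2.2)

lemma window_le (F : Set ℕ) (m N : ℕ) : ((F ∩ Set.Ico m (m + N)).ncard : ℝ) / N ≤ 1 := by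
  rcases Nat.eq_zero_or_pos N with h | h
  · simp [h]
  · rw [div_le_one (by positivity)]
    have h1 : (F ∩ Set.Ico m (m + N)).ncard ≤ (Set.Ico m (m + N)).ncard :=
      Set.ncard_le_ncard Set.inter_subset_right (Set.finite_Ico _ _)
    have h2 : (Set.Ico m (m + N)).ncard = N := by
      rw [← Finset.coe_Ico, Set.ncard_coe_finset, Nat.card_Ico]
      omega
    exact_mod_cast h1.trans_eq h2

lemma ubd_ge_density (F : Set ℕ) {c : ℝ} (hc : 0 < c)
    (hfreq : ∃ᶠ N in atTop, c ≤ ((F ∩ Set.Ico 0 N).ncard : ℝ) / N) : 0 < ubd F := by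
  have hb : ∀ N : ℕ, (⨆ m : ℕ, ((F ∩ Set.Ico m (m + N)).ncard : ℝ) / N) ≤ 1 := by
    intro N
    exact ciSup_le fun m => window_le F m N
  have hmem : ∀ N : ℕ, ((F ∩ Set.Ico 0 N).ncard : ℝ) / N ≤
      ⨆ m : ℕ, ((F ∩ Set.Ico m (m + N)).ncard : ℝ) / N := by
    intro N
    have : BddAbove (Set.range fun m : ℕ => ((F ∩ Set.Ico m (m + N)).ncard : ℝ) / N) :=
      ⟨1, by rintro _ ⟨m, rfl⟩; exact window_le F m N⟩
    simpa using le_ciSup this 0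
  have h1 : c ≤ ubd F := by
    exact le_limsup_of_frequently_le (hfreq.mono fun N hN => hN.trans (hmem N))
      (isBoundedUnder_of ⟨1, hb⟩)
  linarith

lemma exists_pubd_visits {n : ℕ} [CompactSpace X] [MeasurableSpace X] [BorelSpace X]
    (T : X → X) (hT : Continuous T)
    (μ : Measure X) (hprob : IsProbabilityMeasure μ)
    (hinv : ∀ s : Set X, MeasurableSet s → μ (T ⁻¹' s) = μ s)
    (A : Set (Fin n → X)) (hAo : IsOpen A)
    (hApos : 0 < Measure.pi (fun _ : Fin n => μ) A) :
    ∃ x : Fin n → X, 0 < ubd {k : ℕ | (fun i => T^[k] (x i)) ∈ A} := by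
  classical
  set ν := Measure.pi (fun _ : Fin n => μ) with hν
  haveI : IsProbabilityMeasure ν := by infer_instance
  have hTm : MeasurePreserving T μ μ :=
    ⟨hT.measurable, Measure.ext fun s hs => by
      rw [Measure.map_apply hT.measurable hs]; exact hinv s hs⟩
  set S : (Fin n → X) → (Fin n → X) := fun y i => T (y i) with hS
  have hSm : MeasurePreserving S ν ν := measurePreserving_pi _ _ (fun _ => hTm)
  have hSk : ∀ k : ℕ, MeasurePreserving (S^[k]) ν ν := fun k => hSm.iterate k
  have hAm : MeasurableSet A := hAo.measurableSet
  set g : (Fin n → X) → ℝ≥0∞ := A.indicator 1 with hg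
  have hgm : Measurable g := measurable_const.indicator hAm
  set f : ℕ → (Fin n → X) → ℝ≥0∞ :=
    fun N y => (N : ℝ≥0∞)⁻¹ * ∑ k ∈ Finset.range N, g (S^[k] y) with hf
  have hsum_m : ∀ N, Measurable fun y => ∑ k ∈ Finset.range N, g (S^[k] y) :=
    fun N => Finset.measurable_sum _ (fun k _ => hgm.comp (hSk k).measurable)
  have hfm : ∀ N, Measurable (f N) := fun N => (hsum_m N).const_mul _
  have hfle : ∀ N y, f N y ≤ 1 := by
    intro N y
    have hg1 : ∀ v, g v ≤ 1 := by
      intro v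
      rw [hg, Set.indicator_apply]
      split <;> simp
    calc f N y ≤ (N : ℝ≥0∞)⁻¹ * ∑ _k ∈ Finset.range N, 1 :=
          mul_le_mul_right (Finset.sum_le_sum fun k _ => hg1 _) _
      _ = (N : ℝ≥0∞)⁻¹ * N := by simp
      _ ≤ 1 := by
          rcases Nat.eq_zero_or_pos N with h | h
          · simp [h]
          · rw [ENNReal.inv_mul_cancel (by exact_mod_cast h.ne') (by simp)]
  have hint : ∀ N : ℕ, 1 ≤ N → ∫⁻ y, f N y ∂ν = ν A := by
    intro N hN
    have h1 : ∀ k : ℕ, ∫⁻ y, g (S^[k] y) ∂ν = ν A := by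
      intro k
      rw [(hSk k).lintegral_comp hgm, hg, lintegral_indicator_one hAm]
    rw [hf]
    simp only []
    rw [lintegral_const_mul _ (hsum_m N),
      lintegral_finset_sum _ (fun k _ => by exact hgm.comp (hSk k).measurable)]
    simp only [h1, Finset.sum_const, Finset.card_range, nsmul_eq_mul]
    rw [← mul_assoc, ENNReal.inv_mul_cancel (by exact_mod_cast hN.trans_lt' zero_lt_one |>.ne'
        : (N : ℝ≥0∞) ≠ 0) (by simp), one_mul]
  have hlimsup_int : limsup (fun N => ∫⁻ y, f N y ∂ν) atTop = ν A := by
    have he : (fun N => ∫⁻ y, f N y ∂ν) =ᶠ[atTop] fun _ => ν A :=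
      eventually_atTop.2 ⟨1, hint⟩
    rw [limsup_congr he, limsup_const]
  have hkey : ν A ≤ ∫⁻ y, limsup (fun N => f N y) atTop ∂ν := by
    rw [← hlimsup_int]
    exact limsup_lintegral_le (fun _ => (1 : ℝ≥0∞)) hfm
      (fun N => Filter.Eventually.of_forall (hfle N)) (by simp)
  have hx : ∃ x : Fin n → X, limsup (fun N => f N x) atTop ≠ 0 := by
    by_contra h
    push_neg at h
    rw [lintegral_congr h, lintegral_zero] at hkey
    exact hApos.ne' (le_antisymm hkey zero_le)
  obtain ⟨x, hx⟩ := hx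
  set F : Set ℕ := {k | (fun i => T^[k] (x i)) ∈ A} with hF
  have hmemF : ∀ k : ℕ, S^[k] x ∈ A ↔ k ∈ F := by
    intro k
    rw [show S^[k] x = fun i => T^[k] (x i) from iter_pi T k x]
    rfl
  have hcount : ∀ N, f N x =
      (N : ℝ≥0∞)⁻¹ * (((Finset.range N).filter (· ∈ F)).card : ℝ≥0∞) := by
    intro N
    rw [hf]
    simp only []
    congr 1
    rw [← Finset.sum_boole]
    refine Finset.sum_congr rfl fun k _ => ?_
    rw [hg, Set.indicator_apply]
    by_cases hk : S^[k] x ∈ A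
    · rw [if_pos hk, if_pos ((hmemF k).mp hk), Pi.one_apply]
    · rw [if_neg hk, if_neg (fun hkF => hk ((hmemF k).mpr hkF))]
  have hnc : ∀ N, (F ∩ Set.Ico 0 N).ncard = ((Finset.range N).filter (· ∈ F)).card := by
    intro N
    rw [← Set.ncard_coe_finset]
    congr 1
    ext k
    simp only [Set.mem_inter_iff, Set.mem_Ico, Finset.coe_filter, Finset.mem_range,
      Set.mem_setOf_eq, Nat.zero_le, true_and]
    exact and_comm
  have hL1 : limsup (fun N => f N x) atTop ≤ 1 := by
    calc limsup (fun N => f N x) atTop ≤ limsup (fun _ : ℕ => (1:ℝ≥0∞)) atTop :=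
        limsup_le_limsup (Filter.Eventually.of_forall fun N => hfle N x)
      _ = 1 := limsup_const _
  obtain ⟨t, ht0, htL⟩ := exists_between (zero_lt_iff.mpr hx)
  have ht1 : t < 1 := lt_of_lt_of_le htL hL1
  have htne' : t ≠ ⊤ := (lt_trans ht1 ENNReal.one_lt_top).ne
  have hfreq : ∃ᶠ N in atTop, t < f N x := frequently_lt_of_lt_limsup (h := htL)
  have hfreqR : ∃ᶠ N in atTop, t.toReal ≤ ((F ∩ Set.Ico 0 N).ncard : ℝ) / N := by
    refine hfreq.mono fun N hN => ?_
    have hN0 : N ≠ 0 := by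
      rintro rfl
      rw [hf] at hN
      simp at hN
    have hfin : f N x ≠ ⊤ := by
      rw [hcount]
      exact ENNReal.mul_ne_top (ENNReal.inv_ne_top.mpr (by exact_mod_cast hN0)) (by simp)
    have h1 : t.toReal ≤ (f N x).toReal :=
      (ENNReal.toReal_le_toReal htne' hfin).mpr hN.le
    have h2 : (f N x).toReal = ((F ∩ Set.Ico 0 N).ncard : ℝ) / N := by
      rw [hcount, ENNReal.toReal_mul, ENNReal.toReal_inv, hnc]
      simp [inv_mul_eq_div]
    rwa [h2] at h1
  exact ⟨x, ubd_ge_density F (ENNReal.toReal_pos ht0.ne' htne') hfreqR⟩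

end Stmt13Aux

theorem stmt13 [CompactSpace X] [MeasurableSpace X] [BorelSpace X]
    (T : X → X) (hT : Continuous T) (hTs : Function.Surjective T)
    (htr : IsTransitiveSys T) (hwm : WeaklyMixing T) (hnt : ∃ a b : X, a ≠ b)
    (hE : ∃ μ : Measure X, IsProbabilityMeasure μ ∧
      (∀ s : Set X, MeasurableSet s → μ (T ⁻¹' s) = μ s) ∧
      ∀ U : Set X, IsOpen U → U.Nonempty → 0 < μ U)
    (n : ℕ) (hn : 2 ≤ n) :
    BrokenSensitive T Fpubd n := by
  classical
  obtain ⟨μ, hprob, hinv, hsupp⟩ := hE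
  obtain ⟨a0, b0, hab0⟩ := hnt
  haveI : Nonempty X := ⟨a0⟩
  haveI : Infinite X := Stmt13Aux.infinite_of_wm T hwm ⟨a0, b0, hab0⟩
  set e := Infinite.natEmbedding X with he
  set z : Fin n → X := fun i => e i with hz
  have hzinj : ∀ i j : Fin n, i ≠ j → z i ≠ z j := by
    intro i j hij h
    exact hij (Fin.val_injective (e.injective h))
  have hD : (Finset.univ.offDiag : Finset (Fin n × Fin n)).Nonempty := by
    refine ⟨(⟨0, by omega⟩, ⟨1, by omega⟩),
      Finset.mem_offDiag.mpr ⟨Finset.mem_univ _, Finset.mem_univ _, ?_⟩⟩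
    intro h
    have := congrArg Fin.val h
    simp at this
  set δ := (Finset.univ.offDiag.inf' hD fun p : Fin n × Fin n => dist (z p.1) (z p.2)) / 3
    with hδdef
  have hδ : 0 < δ := by
    apply div_pos _ (by norm_num)
    rw [Finset.lt_inf'_iff]
    rintro ⟨i, j⟩ hp
    exact dist_pos.mpr (hzinj i j (Finset.mem_offDiag.mp hp).2.2)
  have hkey : ∀ i j : Fin n, i ≠ j → 3 * δ ≤ dist (z i) (z j) := by
    intro i j hij
    have h := Finset.inf'_le (f := fun p : Fin n × Fin n => dist (z p.1) (z p.2))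
      (b := (i, j)) (Finset.mem_offDiag.mpr ⟨Finset.mem_univ _, Finset.mem_univ _, hij⟩)
    rw [hδdef]
    linarith
  have hsep : ∀ (i j : Fin n), i ≠ j → ∀ a b : X, a ∈ Metric.ball (z i) δ →
      b ∈ Metric.ball (z j) δ → δ < dist a b := by
    intro i j hij a b ha hb
    rw [Metric.mem_ball] at ha hb
    have h4 := dist_triangle4 (z i) a b (z j)
    have h1 := hkey i j hij
    have h2 : dist (z i) a < δ := by rw [dist_comm]; exact ha
    have h3 : dist b (z j) < δ := hb
    linarith
  set A : Set (Fin n → X) := Set.univ.pi fun i => Metric.ball (z i) δ with hA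
  have hAo : IsOpen A := isOpen_set_pi Set.finite_univ fun i _ => Metric.isOpen_ball
  have hApos : 0 < Measure.pi (fun _ : Fin n => μ) A := by
    rw [hA, Measure.pi_pi, CanonicallyOrderedAdd.prod_pos]
    intro i _
    exact hsupp _ Metric.isOpen_ball ⟨z i, Metric.mem_ball_self hδ⟩
  obtain ⟨w, hw⟩ := Stmt13Aux.exists_pubd_visits T hT μ hprob hinv A hAo hApos
  set F : Set ℕ := {k : ℕ | (fun i => T^[k] (w i)) ∈ A} with hF
  refine ⟨δ, hδ, F, hw, ?_⟩
  intro U hUo hUn l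
  set K : Finset ℕ := (Finset.Icc 1 l).filter (· ∈ F) with hK
  set W : Fin n → Set X := fun i => ⋂ k ∈ K, T^[k] ⁻¹' Metric.ball (z i) δ with hW
  have hWo : ∀ i, IsOpen (W i) := fun i =>
    isOpen_biInter_finset fun k _ => Metric.isOpen_ball.preimage (hT.iterate k)
  have hWn : ∀ i, w i ∈ W i := by
    intro i
    refine Set.mem_iInter₂.mpr fun k hk => ?_
    have hkF : k ∈ F := (Finset.mem_filter.mp hk).2
    rw [hF, Set.mem_setOf_eq, hA, Set.mem_univ_pi] at hkF
    exact hkF i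
  obtain ⟨m, hm⟩ := Stmt13Aux.prod_transitive T hT htr hwm n (fun _ => U) W
    (fun _ => hUo) (fun _ => hUn) hWo (fun i => ⟨w i, hWn i⟩)
  refine ⟨fun i => (hm i).choose, fun i => (hm i).choose_spec.1, m, ?_⟩
  rintro k ⟨hkF, hkI⟩ i j hij
  have hkK : k ∈ K := Finset.mem_filter.mpr ⟨Finset.mem_Icc.mpr (Set.mem_Icc.mp hkI), hkF⟩
  have hball : ∀ i' : Fin n, T^[m + k] ((hm i').choose) ∈ Metric.ball (z i') δ := by
    intro i'
    have h2 : T^[m] ((hm i').choose) ∈ W i' := (hm i').choose_spec.2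
    have h3 := Set.mem_iInter₂.mp h2 k hkK
    rw [add_comm, Function.iterate_add_apply]
    exact h3
  exact hsep i j hij _ _ (hball i) (hball j)
end
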